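/- arXiv:2503.07166 — 5 statements merged into one kernel-verified Lean document; each statement's English description precedes it below -/
import Mathlib

section
/- Let k, n be natural numbers with 1 ≤ k ≤ n − 2. If there exists a (k × n, n)-near triple array, then there exists an ((n − k) × n, n)-near triple array and an ((n − k) × (n − 1), n)-near triple array. -/
open Finset

/-- An `r × c` row-column design on `v` symbols is binary if no symbol occurs
twice in any row or in any column. -/
def IsBinaryDesign {r c v : ℕ} (T : Fin r × Fin c → Fin v) : Prop :=
  (∀ (i : Fin r) (j j' : Fin c), j ≠ j' → T (i, j) ≠ T (i, j')) ∧
  (∀ (j : Fin c) (i i' : Fin r), i ≠ i' → T (i, j) ≠ T (i', j))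

/-- The replication number of a symbol `s`: the number of cells containing `s`. -/
def replNum {r c v : ℕ} (T : Fin r × Fin c → Fin v) (s : Fin v) : ℕ :=
  (Finset.univ.filter (fun p : Fin r × Fin c => T p = s)).card

/-- The average replication number `e = rc/v` as a rational number. -/
def avgRepl (r c v : ℕ) : ℚ := ((r : ℚ) * (c : ℚ)) / (v : ℚ)

/-- A design is equireplicate if `e = rc/v` is an integer and every symbol has
replication number `e`. -/
def IsEquireplicate {r c v : ℕ} (T : Fin r × Fin c → Fin v) : Prop :=
  (avgRepl r c v).den = 1 ∧ ∀ s : Fin v, (replNum T s : ℚ) = avgRepl r c v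

/-- A design is near equireplicate if `e = rc/v` is not an integer and every symbol
has replication number `⌊e⌋` or `⌈e⌉`. -/
def IsNearEquireplicate {r c v : ℕ} (T : Fin r × Fin c → Fin v) : Prop :=
  (avgRepl r c v).den ≠ 1 ∧
  ∀ s : Fin v, (replNum T s : ℤ) = ⌊avgRepl r c v⌋ ∨ (replNum T s : ℤ) = ⌈avgRepl r c v⌉

/-- The set of symbols occurring in row `i`. -/
def rowSet {r c v : ℕ} (T : Fin r × Fin c → Fin v) (i : Fin r) : Finset (Fin v) :=
  Finset.univ.image (fun j : Fin c => T (i, j))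

/-- The set of symbols occurring in column `j`. -/
def colSet {r c v : ℕ} (T : Fin r × Fin c → Fin v) (j : Fin c) : Finset (Fin v) :=
  Finset.univ.image (fun i : Fin r => T (i, j))

/-- Average row-column intersection size `λ_rc`. -/
def lamRC {r c v : ℕ} (T : Fin r × Fin c → Fin v) : ℚ :=
  (∑ i : Fin r, ∑ j : Fin c, ((rowSet T i ∩ colSet T j).card : ℚ)) / ((r : ℚ) * (c : ℚ))

/-- Average row-row intersection size `λ_rr`. -/
def lamRR {r c v : ℕ} (T : Fin r × Fin c → Fin v) : ℚ :=
  (∑ p ∈ Finset.univ.filter (fun p : Fin r × Fin r => p.1 < p.2),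
      ((rowSet T p.1 ∩ rowSet T p.2).card : ℚ)) / ((r : ℚ) * ((r : ℚ) - 1) / 2)

/-- Average column-column intersection size `λ_cc`. -/
def lamCC {r c v : ℕ} (T : Fin r × Fin c → Fin v) : ℚ :=
  (∑ p ∈ Finset.univ.filter (fun p : Fin c × Fin c => p.1 < p.2),
      ((colSet T p.1 ∩ colSet T p.2).card : ℚ)) / ((c : ℚ) * ((c : ℚ) - 1) / 2)

/-- An `(r × c, v)`-near triple array. -/
def IsNearTripleArray {r c v : ℕ} (T : Fin r × Fin c → Fin v) : Prop :=
  IsBinaryDesign T ∧ (IsEquireplicate T ∨ IsNearEquireplicate T) ∧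
  (∀ (i : Fin r) (j : Fin c),
    ((rowSet T i ∩ colSet T j).card : ℤ) = ⌊lamRC T⌋ ∨
    ((rowSet T i ∩ colSet T j).card : ℤ) = ⌈lamRC T⌉) ∧
  (∀ i j : Fin r, i ≠ j →
    ((rowSet T i ∩ rowSet T j).card : ℤ) = ⌊lamRR T⌋ ∨
    ((rowSet T i ∩ rowSet T j).card : ℤ) = ⌈lamRR T⌉) ∧
  (∀ i j : Fin c, i ≠ j →
    ((colSet T i ∩ colSet T j).card : ℤ) = ⌊lamCC T⌋ ∨
    ((colSet T i ∩ colSet T j).card : ℤ) = ⌈lamCC T⌉)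


lemma sdr_of_regular {n d : ℕ} (hd : 1 ≤ d) (S : Fin n → Finset (Fin n))
    (hcol : ∀ j, (S j).card = d)
    (hsym : ∀ s : Fin n, (univ.filter (fun j => s ∈ S j)).card = d) :
    ∃ σ : Fin n → Fin n, Function.Injective σ ∧ ∀ j, σ j ∈ S j := by
  apply (Finset.all_card_le_biUnion_card_iff_exists_injective S).mp
  intro A
  have key : d * A.card ≤ d * (A.biUnion S).card := by
    calc d * A.card = ∑ j ∈ A, (S j).card := by
          rw [Finset.sum_congr rfl (fun j _ => hcol j), Finset.sum_const, smul_eq_mul,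
            Nat.mul_comm]
      _ = ∑ j ∈ A, ∑ s ∈ A.biUnion S, (if s ∈ S j then 1 else 0) := by
          refine Finset.sum_congr rfl (fun j hj => ?_)
          rw [← Finset.card_filter]
          congr 1
          ext s
          simp only [Finset.mem_filter, Finset.mem_biUnion]
          exact ⟨fun hs => ⟨⟨j, hj, hs⟩, hs⟩, fun h => h.2⟩
      _ = ∑ s ∈ A.biUnion S, ∑ j ∈ A, (if s ∈ S j then 1 else 0) := Finset.sum_comm
      _ ≤ ∑ s ∈ A.biUnion S, d := by
          refine Finset.sum_le_sum (fun s _ => ?_)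
          rw [← Finset.card_filter]
          rw [← hsym s]
          exact Finset.card_le_card (Finset.filter_subset_filter _ (Finset.subset_univ A))
      _ = (A.biUnion S).card * d := by rw [Finset.sum_const, smul_eq_mul]
      _ = d * (A.biUnion S).card := Nat.mul_comm _ _
  exact Nat.le_of_mul_le_mul_left key hd

lemma decomp_of_regular {n : ℕ} : ∀ (d : ℕ) (S : Fin n → Finset (Fin n)),
    (∀ j, (S j).card = d) →
    (∀ s : Fin n, (univ.filter (fun j => s ∈ S j)).card = d) →
    ∃ M : Fin d → Fin n → Fin n,
      (∀ i, Function.Bijective (M i)) ∧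
      (∀ j s, s ∈ S j ↔ ∃ i, M i j = s) ∧
      (∀ (j : Fin n) (i i' : Fin d), i ≠ i' → M i j ≠ M i' j) := by
  intro d
  induction d with
  | zero =>
    intro S hcol _
    refine ⟨fun i => i.elim0, fun i => i.elim0, fun j s => ?_, fun j i => i.elim0⟩
    constructor
    · intro hs
      rw [Finset.card_eq_zero.mp (hcol j)] at hs
      exact absurd hs (Finset.notMem_empty s)
    · rintro ⟨i, _⟩; exact i.elim0
  | succ d ih =>
    intro S hcol hsym
    obtain ⟨σ, hinj, hmem⟩ := sdr_of_regular (Nat.succ_le_succ (Nat.zero_le d)) S hcol hsym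
    have hbij : Function.Bijective σ := Finite.injective_iff_bijective.mp hinj
    let e := Equiv.ofBijective σ hbij
    have hσe : ∀ t, σ (e.symm t) = t := fun t => e.apply_symm_apply t
    have hes : ∀ j, e.symm (σ j) = j := fun j => e.symm_apply_apply j
    set S' : Fin n → Finset (Fin n) := fun j => (S j).erase (σ j) with hS'
    have hcol' : ∀ j, (S' j).card = d := fun j => by
      rw [hS']; simp [Finset.card_erase_of_mem (hmem j), hcol j]
    have hsym' : ∀ s : Fin n, (univ.filter (fun j => s ∈ S' j)).card = d := by
      intro s
      have hset : univ.filter (fun j => s ∈ S' j)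
          = (univ.filter (fun j => s ∈ S j)).erase (e.symm s) := by
        ext j
        simp only [hS', Finset.mem_filter, Finset.mem_erase, Finset.mem_univ, true_and]
        constructor
        · rintro ⟨hne, hj⟩
          exact ⟨fun hj0 => hne (by rw [hj0, hσe]), hj⟩
        · rintro ⟨hne, hj⟩
          refine ⟨fun heq => hne ?_, hj⟩
          rw [heq, hes]
      rw [hset, Finset.card_erase_of_mem, hsym s]
      · omega
      · simp only [Finset.mem_filter, Finset.mem_univ, true_and]
        have h2 := hmem (e.symm s)
        rwa [hσe s] at h2
    obtain ⟨M', hbij', hcover', hdist'⟩ := ih S' hcol' hsym'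
    refine ⟨Fin.cases σ M', ?_, ?_, ?_⟩
    · intro i
      refine Fin.cases ?_ ?_ i
      · simpa using hbij
      · intro i'; simpa using hbij' i'
    · intro j s
      constructor
      · intro hs
        by_cases hcase : s = σ j
        · exact ⟨0, by simp [hcase]⟩
        · have hmem' : s ∈ S' j := Finset.mem_erase.mpr ⟨hcase, hs⟩
          obtain ⟨i', hi'⟩ := (hcover' j s).mp hmem'
          exact ⟨i'.succ, by simpa using hi'⟩
      · rintro ⟨i, rfl⟩
        refine Fin.cases ?_ ?_ i
        · simpa using hmem j
        · intro i'
          have hmem' : M' i' j ∈ S' j := (hcover' j _).mpr ⟨i', rfl⟩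
          simpa using Finset.mem_of_mem_erase hmem'
    · intro j i i' hne h
      rcases Fin.eq_zero_or_eq_succ i with rfl | ⟨a, rfl⟩ <;>
        rcases Fin.eq_zero_or_eq_succ i' with rfl | ⟨b, rfl⟩
      · exact hne rfl
      · simp only [Fin.cases_zero, Fin.cases_succ] at h
        have hb : M' b j ∈ S' j := (hcover' j _).mpr ⟨b, rfl⟩
        exact (Finset.mem_erase.mp hb).1 h.symm
      · simp only [Fin.cases_zero, Fin.cases_succ] at h
        have ha : M' a j ∈ S' j := (hcover' j _).mpr ⟨a, rfl⟩
        exact (Finset.mem_erase.mp ha).1 h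
      · simp only [Fin.cases_succ] at h
        exact hdist' j a b (fun hab => hne (by rw [hab])) h

lemma avg_floor_ceil {ι : Type*} (s : Finset ι) (hs : s.Nonempty) (f : ι → ℕ) (a : ℤ)
    (h : ∀ p ∈ s, (f p : ℤ) = a ∨ (f p : ℤ) = a + 1)
    (lam : ℚ) (hlam : lam = (∑ p ∈ s, (f p : ℚ)) / (s.card : ℚ)) :
    ∀ p ∈ s, (f p : ℤ) = ⌊lam⌋ ∨ (f p : ℤ) = ⌈lam⌉ := by
  have hcard : (0 : ℚ) < (s.card : ℚ) := by
    exact_mod_cast Finset.card_pos.mpr hs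
  by_cases hall : ∀ p ∈ s, (f p : ℤ) = a
  · -- all values equal a, so lam = a
    have hlam' : lam = (a : ℚ) := by
      rw [hlam]
      have : ∑ p ∈ s, (f p : ℚ) = (s.card : ℚ) * (a : ℚ) := by
        rw [Finset.sum_congr rfl (fun p hp => ?_), Finset.sum_const, nsmul_eq_mul]
        exact_mod_cast hall p hp
      rw [this, mul_comm, mul_div_assoc, div_self (ne_of_gt hcard), mul_one]
    intro p hp
    left
    rw [hall p hp, hlam', Int.floor_intCast]
  · push_neg at hall
    obtain ⟨q, hq, hqa⟩ := hall
    have hq1 : (f q : ℤ) = a + 1 := (h q hq).resolve_left hqa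
    -- lower bound: lam > a
    have hlow : (a : ℚ) < lam := by
      rw [hlam, lt_div_iff₀ hcard]
      have hb : ∀ p ∈ s, (a : ℚ) ≤ (f p : ℚ) := by
        intro p hp
        rcases h p hp with h1 | h1 <;> [exact_mod_cast h1.ge; exact_mod_cast (by omega : a ≤ (f p : ℤ))]
      calc (a : ℚ) * (s.card : ℚ) = ∑ p ∈ s, (a : ℚ) := by
            rw [Finset.sum_const, nsmul_eq_mul]; ring
        _ < ∑ p ∈ s, (f p : ℚ) := by
            apply Finset.sum_lt_sum hb
            exact ⟨q, hq, by exact_mod_cast (by omega : a < (f q : ℤ))⟩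
    by_cases hall' : ∀ p ∈ s, (f p : ℤ) = a + 1
    · have hlam' : lam = (a : ℚ) + 1 := by
        rw [hlam]
        have : ∑ p ∈ s, (f p : ℚ) = (s.card : ℚ) * ((a : ℚ) + 1) := by
          rw [Finset.sum_congr rfl (fun p hp => ?_), Finset.sum_const, nsmul_eq_mul]
          exact_mod_cast hall' p hp
        rw [this, mul_comm, mul_div_assoc, div_self (ne_of_gt hcard), mul_one]
      intro p hp
      left
      rw [hall' p hp, hlam']
      norm_num
    · push_neg at hall'
      obtain ⟨q', hq', hq'a⟩ := hall'
      have hq'1 : (f q' : ℤ) = a := (h q' hq').resolve_right hq'a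
      have hhigh : lam < (a : ℚ) + 1 := by
        rw [hlam, div_lt_iff₀ hcard]
        have hb : ∀ p ∈ s, (f p : ℚ) ≤ (a : ℚ) + 1 := by
          intro p hp
          rcases h p hp with h1 | h1 <;>
            [exact_mod_cast (by omega : (f p : ℤ) ≤ a + 1); exact_mod_cast h1.le]
        calc ∑ p ∈ s, (f p : ℚ) < ∑ p ∈ s, ((a : ℚ) + 1) := by
              apply Finset.sum_lt_sum hb
              exact ⟨q', hq', by exact_mod_cast (by omega : (f q' : ℤ) < a + 1)⟩
          _ = ((a : ℚ) + 1) * (s.card : ℚ) := by rw [Finset.sum_const, nsmul_eq_mul]; ring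
      have hfloor : ⌊lam⌋ = a := by
        rw [Int.floor_eq_iff]
        constructor
        · exact hlow.le
        · exact_mod_cast hhigh
      have hceil : ⌈lam⌉ = a + 1 := by
        rw [Int.ceil_eq_iff]
        constructor
        · push_cast; linarith
        · push_cast; linarith
      intro p hp
      rcases h p hp with h1 | h1
      · left; rw [h1, hfloor]
      · right; rw [h1, hceil]

lemma card_pairs_cast (m : ℕ) :
    (((univ : Finset (Fin m × Fin m)).filter (fun p => p.1 < p.2)).card : ℚ)
      = (m : ℚ) * ((m : ℚ) - 1) / 2 := by
  have h1 : ((univ : Finset (Fin m × Fin m)).filter (fun p => p.1 < p.2)).card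
      = ∑ b : Fin m, (b : ℕ) := by
    rw [Finset.card_filter, Fintype.sum_prod_type_right]
    refine Finset.sum_congr rfl (fun b _ => ?_)
    rw [← Finset.card_filter]
    have : (univ.filter (fun a : Fin m => a < b)) = Finset.Iio b := by
      ext a; simp
    rw [this, Fin.card_Iio]
  have h2 : (∑ b : Fin m, (b : ℕ)) * 2 = m * (m - 1) := by
    rw [Fin.sum_univ_eq_sum_range (fun i => i)]
    exact Finset.sum_range_id_mul_two m
  rcases Nat.eq_zero_or_pos m with rfl | hm
  · simp [h1]
  · have h3 : ((∑ b : Fin m, (b : ℕ) : ℕ) : ℚ) * 2 = (m : ℚ) * ((m : ℚ) - 1) := by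
      have := congrArg (fun x : ℕ => (x : ℚ)) h2
      push_cast [Nat.cast_sub hm] at this
      exact_mod_cast this
    rw [h1]
    rw [eq_div_iff (by norm_num : (2:ℚ) ≠ 0)]
    exact_mod_cast h3

lemma main_aux (n r c : ℕ) (hr2 : 2 ≤ r) (hrn : r + 1 ≤ n) (hc : c + 1 = n)
    (S : Fin n → Finset (Fin n))
    (M : Fin r → Fin n → Fin n) (hbijM : ∀ i, Function.Bijective (M i))
    (hcover : ∀ j s, s ∈ S j ↔ ∃ i, M i j = s)
    (hdist : ∀ (j : Fin n) (i i' : Fin r), i ≠ i' → M i j ≠ M i' j)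
    (hScard : ∀ j, (S j).card = r)
    (hsymS : ∀ s : Fin n, (univ.filter (fun j => s ∈ S j)).card = r)
    (a : ℤ)
    (hSS : ∀ (i j : Fin n), i ≠ j →
      ((S i ∩ S j).card : ℤ) = a ∨ ((S i ∩ S j).card : ℤ) = a + 1) :
    IsNearTripleArray (fun p : Fin r × Fin n => M p.1 p.2) ∧
    IsNearTripleArray (fun p : Fin r × Fin c => M p.1 (Fin.castLE (by omega) p.2)) := by
  have hn3 : 3 ≤ n := by omega
  have hc2 : 2 ≤ c := by omega
  set T' : Fin r × Fin n → Fin n := fun p => M p.1 p.2 with hT'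
  -- basic facts about T'
  have hrow' : ∀ i, rowSet T' i = univ := by
    intro i
    refine Finset.eq_univ_of_forall (fun s => ?_)
    obtain ⟨j, hj⟩ := (hbijM i).surjective s
    exact Finset.mem_image.mpr ⟨j, Finset.mem_univ j, hj⟩
  have hcol' : ∀ j, colSet T' j = S j := by
    intro j
    ext s
    rw [colSet, Finset.mem_image]
    constructor
    · rintro ⟨i, -, hi⟩; exact (hcover j s).mpr ⟨i, hi⟩
    · intro hs; obtain ⟨i, hi⟩ := (hcover j s).mp hs
      exact ⟨i, Finset.mem_univ i, hi⟩
  have hbin' : IsBinaryDesign T' := by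
    constructor
    · intro i j j' hne heq
      exact hne ((hbijM i).injective heq)
    · intro j i i' hne heq
      exact hdist j i i' hne heq
  have hrepl' : ∀ s, replNum T' s = r := by
    intro s
    rw [replNum, Finset.card_filter, Fintype.sum_prod_type]
    have : ∀ i : Fin r, (∑ j : Fin n, if T' (i, j) = s then 1 else 0) = 1 := by
      intro i
      rw [← Finset.card_filter]
      rw [Finset.card_eq_one]
      refine ⟨(Equiv.ofBijective (M i) (hbijM i)).symm s, ?_⟩
      ext j
      simp only [Finset.mem_filter, Finset.mem_univ, true_and, Finset.mem_singleton]
      exact (Equiv.ofBijective (M i) (hbijM i)).apply_eq_iff_eq_symm_apply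
    rw [Finset.sum_congr rfl (fun i _ => this i), Finset.sum_const, smul_eq_mul, mul_one,
      Finset.card_univ, Fintype.card_fin]
  -- T' is a near triple array
  have hNq : (0:ℚ) < (n:ℚ) := by exact_mod_cast (by omega : 0 < n)
  have hNne : ((n:ℚ)) ≠ 0 := ne_of_gt hNq
  have hNTA' : IsNearTripleArray T' := by
    refine ⟨hbin', Or.inl ?_, ?_, ?_, ?_⟩
    · -- equireplicate
      have havg : avgRepl r n n = (r:ℚ) := by
        rw [avgRepl, mul_div_assoc, div_self hNne, mul_one]
      constructor
      · rw [havg]; exact Rat.den_natCast r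
      · intro s; rw [hrepl' s, havg]
    · -- lamRC
      have hval : ∀ p : Fin r × Fin n, (rowSet T' p.1 ∩ colSet T' p.2).card = r := by
        intro p; rw [hrow', hcol', Finset.univ_inter, hScard]
      have hlam : lamRC T' = (∑ p ∈ (univ : Finset (Fin r × Fin n)),
          ((rowSet T' p.1 ∩ colSet T' p.2).card : ℚ)) /
          (((univ : Finset (Fin r × Fin n)).card : ℚ)) := by
        rw [lamRC, Fintype.sum_prod_type]
        congr 1
        rw [Finset.card_univ, Fintype.card_prod, Fintype.card_fin, Fintype.card_fin]
        push_cast; ring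
      have key := avg_floor_ceil (univ : Finset (Fin r × Fin n))
        ⟨(⟨0, by omega⟩, ⟨0, by omega⟩), Finset.mem_univ _⟩
        (fun p => (rowSet T' p.1 ∩ colSet T' p.2).card) (r : ℤ)
        (fun p _ => Or.inl (by exact_mod_cast congrArg (Nat.cast (R := ℤ)) (hval p)))
        (lamRC T') hlam
      intro i j
      exact key (i, j) (Finset.mem_univ _)
    · -- lamRR
      have hval : ∀ p : Fin r × Fin r, (rowSet T' p.1 ∩ rowSet T' p.2).card = n := by
        intro p; rw [hrow', hrow', Finset.univ_inter, Finset.card_univ, Fintype.card_fin]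
      have hlam : lamRR T' = (∑ p ∈ (univ : Finset (Fin r × Fin r)).filter
          (fun p => p.1 < p.2), ((rowSet T' p.1 ∩ rowSet T' p.2).card : ℚ)) /
          ((((univ : Finset (Fin r × Fin r)).filter (fun p => p.1 < p.2)).card : ℚ)) := by
        rw [lamRR]; congr 1; exact (card_pairs_cast r).symm
      have hne0 : ((⟨0, by omega⟩ : Fin r), (⟨1, by omega⟩ : Fin r)) ∈
          (univ : Finset (Fin r × Fin r)).filter (fun p => p.1 < p.2) := by
        refine Finset.mem_filter.mpr ⟨Finset.mem_univ _, ?_⟩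
        exact Fin.mk_lt_mk.mpr zero_lt_one
      have key := avg_floor_ceil _ ⟨_, hne0⟩
        (fun p : Fin r × Fin r => (rowSet T' p.1 ∩ rowSet T' p.2).card) (n : ℤ)
        (fun p _ => Or.inl (by exact_mod_cast congrArg (Nat.cast (R := ℤ)) (hval p)))
        (lamRR T') hlam
      intro i j hne
      rcases hne.lt_or_gt with hlt | hlt
      · exact key (i, j) (Finset.mem_filter.mpr ⟨Finset.mem_univ _, hlt⟩)
      · have := key (j, i) (Finset.mem_filter.mpr ⟨Finset.mem_univ _, hlt⟩)
        simp only at this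
        rwa [Finset.inter_comm] at this
    · -- lamCC
      have hlam : lamCC T' = (∑ p ∈ (univ : Finset (Fin n × Fin n)).filter
          (fun p => p.1 < p.2), ((colSet T' p.1 ∩ colSet T' p.2).card : ℚ)) /
          ((((univ : Finset (Fin n × Fin n)).filter (fun p => p.1 < p.2)).card : ℚ)) := by
        rw [lamCC]; congr 1; exact (card_pairs_cast n).symm
      have hne0 : ((⟨0, by omega⟩ : Fin n), (⟨1, by omega⟩ : Fin n)) ∈
          (univ : Finset (Fin n × Fin n)).filter (fun p => p.1 < p.2) := by
        refine Finset.mem_filter.mpr ⟨Finset.mem_univ _, ?_⟩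
        exact Fin.mk_lt_mk.mpr zero_lt_one
      have key := avg_floor_ceil _ ⟨_, hne0⟩
        (fun p : Fin n × Fin n => (colSet T' p.1 ∩ colSet T' p.2).card) a
        (fun p hp => by
          show ((colSet T' p.1 ∩ colSet T' p.2).card : ℤ) = a ∨
            ((colSet T' p.1 ∩ colSet T' p.2).card : ℤ) = a + 1
          rw [hcol', hcol']
          exact hSS p.1 p.2 (ne_of_lt (Finset.mem_filter.mp hp).2))
        (lamCC T') hlam
      intro i j hne
      rcases hne.lt_or_gt with hlt | hlt
      · exact key (i, j) (Finset.mem_filter.mpr ⟨Finset.mem_univ _, hlt⟩)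
      · have := key (j, i) (Finset.mem_filter.mpr ⟨Finset.mem_univ _, hlt⟩)
        simp only at this
        rwa [Finset.inter_comm] at this
  refine ⟨hNTA', ?_⟩
  -- Now the truncated array T''
  set g : Fin c → Fin n := Fin.castLE (by omega) with hg
  set lst : Fin n := ⟨c, by omega⟩ with hlst
  set T'' : Fin r × Fin c → Fin n := fun p => M p.1 (g p.2) with hT''
  have hglt : ∀ j : Fin c, g j ≠ lst := by
    intro j h
    have := congrArg Fin.val h
    simp only [hg, Fin.castLE, hlst] at this
    omega
  have hginj : Function.Injective g := Fin.castLE_injective _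
  have hfind : ∀ (i : Fin r) (s : Fin n), M i lst ≠ s → ∃! j : Fin c, M i (g j) = s := by
    intro i s hP
    obtain ⟨j0, hj0⟩ := (hbijM i).surjective s
    have hj0lst : j0 ≠ lst := fun h => hP (h ▸ hj0)
    have hj0lt : (j0 : ℕ) < c := by
      have h1 : (j0 : ℕ) < n := j0.2
      have h2 : (j0 : ℕ) ≠ c := fun h => hj0lst (Fin.ext h)
      omega
    refine ⟨⟨(j0 : ℕ), hj0lt⟩, ?_, ?_⟩
    · show M i (g ⟨(j0 : ℕ), hj0lt⟩) = s
      have : g ⟨(j0 : ℕ), hj0lt⟩ = j0 := Fin.ext rfl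
      rw [this, hj0]
    · intro j' hj'
      have : g j' = j0 := (hbijM i).injective (hj'.trans hj0.symm)
      have hval2 : (j' : ℕ) = (j0 : ℕ) := congrArg Fin.val this
      exact Fin.ext hval2
  have hrow'' : ∀ i, rowSet T'' i = univ.erase (M i lst) := by
    intro i
    ext s
    rw [rowSet, Finset.mem_image, Finset.mem_erase]
    constructor
    · rintro ⟨j, -, hj⟩
      refine ⟨fun h => ?_, Finset.mem_univ s⟩
      exact hglt j ((hbijM i).injective (hj.trans h))
    · rintro ⟨hne, -⟩
      obtain ⟨j, hj, -⟩ := hfind i s (fun h => hne h.symm)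
      exact ⟨j, Finset.mem_univ j, hj⟩
  have hcol'' : ∀ j, colSet T'' j = S (g j) := by
    intro j
    ext s
    rw [colSet, Finset.mem_image]
    constructor
    · rintro ⟨i, -, hi⟩; exact (hcover (g j) s).mpr ⟨i, hi⟩
    · intro hs; obtain ⟨i, hi⟩ := (hcover (g j) s).mp hs
      exact ⟨i, Finset.mem_univ i, hi⟩
  have hbin'' : IsBinaryDesign T'' := by
    constructor
    · intro i j j' hne heq
      exact hne (hginj ((hbijM i).injective heq))
    · intro j i i' hne heq
      exact hdist (g j) i i' hne heq
  -- replication numbers of T''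
  have hcard1 : ∀ s : Fin n, (univ.filter (fun i : Fin r => M i lst = s)).card ≤ 1 := by
    intro s
    refine Finset.card_le_one.mpr (fun i hi i' hi' => ?_)
    by_contra hne
    exact hdist lst i i' hne
      ((Finset.mem_filter.mp hi).2.trans (Finset.mem_filter.mp hi').2.symm)
  have hreplT'' : ∀ s, replNum T'' s + (univ.filter (fun i : Fin r => M i lst = s)).card
      = r := by
    intro s
    rw [replNum, Finset.card_filter, Fintype.sum_prod_type]
    have hinner : ∀ i : Fin r, (∑ j : Fin c, if T'' (i, j) = s then 1 else 0)
        = if M i lst = s then 0 else 1 := by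
      intro i
      rw [← Finset.card_filter]
      by_cases hP : M i lst = s
      · rw [if_pos hP, Finset.card_eq_zero]
        ext j
        simp only [Finset.mem_filter, Finset.mem_univ, true_and, Finset.notMem_empty,
          iff_false]
        intro h
        exact hglt j ((hbijM i).injective (h.trans hP.symm))
      · rw [if_neg hP, Finset.card_eq_one]
        obtain ⟨j, hj, huniq⟩ := hfind i s hP
        refine ⟨j, ?_⟩
        ext j'
        simp only [Finset.mem_filter, Finset.mem_univ, true_and, Finset.mem_singleton]
        exact ⟨fun h => huniq j' h, fun h => h ▸ hj⟩
    rw [Finset.sum_congr rfl (fun i _ => hinner i)]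
    have : ∀ i : Fin r, (if M i lst = s then 0 else 1)
        = if ¬ (M i lst = s) then 1 else 0 := by
      intro i; by_cases h : M i lst = s <;> simp [h]
    rw [Finset.sum_congr rfl (fun i _ => this i), ← Finset.card_filter]
    have := Finset.card_filter_add_card_filter_not
      (s := (univ : Finset (Fin r))) (p := fun i => M i lst = s)
    rw [Finset.card_univ, Fintype.card_fin] at this
    omega
  -- average replication for T''
  have hcq : (c:ℚ) = (n:ℚ) - 1 := by
    have : ((c + 1 : ℕ) : ℚ) = (n : ℚ) := by exact_mod_cast congrArg (Nat.cast (R := ℚ)) hc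
    push_cast at this
    linarith
  have hrq2 : (2:ℚ) ≤ (r:ℚ) := by exact_mod_cast hr2
  have hrnq : (r:ℚ) + 1 ≤ (n:ℚ) := by exact_mod_cast hrn
  have havg'' : avgRepl r c n = ((r:ℚ) * (c:ℚ)) / (n:ℚ) := rfl
  have hlow : ((r:ℚ) - 1) < avgRepl r c n := by
    rw [havg'', lt_div_iff₀ hNq, hcq]
    nlinarith
  have hhigh : avgRepl r c n < (r:ℚ) := by
    rw [havg'', div_lt_iff₀ hNq, hcq]
    nlinarith
  have hfl : ⌊avgRepl r c n⌋ = (r:ℤ) - 1 := by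
    rw [Int.floor_eq_iff]
    constructor
    · push_cast; linarith
    · push_cast; linarith
  have hcl : ⌈avgRepl r c n⌉ = (r:ℤ) := by
    rw [Int.ceil_eq_iff]
    constructor
    · push_cast; linarith
    · push_cast; linarith
  have hden'' : (avgRepl r c n).den ≠ 1 := by
    intro hden
    have hnum : (((avgRepl r c n).num : ℚ)) = avgRepl r c n := by
      conv_rhs => rw [← Rat.num_div_den (avgRepl r c n)]
      rw [hden]
      simp
    have hA : (r:ℤ) - 1 < (avgRepl r c n).num := by
      have := hlow; rw [← hnum] at this; exact_mod_cast this
    have hB : (avgRepl r c n).num < (r:ℤ) := by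
      have := hhigh; rw [← hnum] at this; exact_mod_cast this
    omega
  have hgoal : IsNearTripleArray T'' := by
    refine ⟨hbin'', Or.inr ⟨hden'', ?_⟩, ?_, ?_, ?_⟩
    · -- near equireplicate
      intro s
      rw [hfl, hcl]
      have h1 := hreplT'' s
      have h2 := hcard1 s
      omega
    · -- lamRC
      have hval : ∀ p : Fin r × Fin c,
          ((rowSet T'' p.1 ∩ colSet T'' p.2).card : ℤ) = (r:ℤ) - 1 ∨
          ((rowSet T'' p.1 ∩ colSet T'' p.2).card : ℤ) = ((r:ℤ) - 1) + 1 := by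
        intro p
        rw [hrow'', hcol'']
        have hinter : univ.erase (M p.1 lst) ∩ S (g p.2)
            = (S (g p.2)).erase (M p.1 lst) := by
          ext t
          simp only [Finset.mem_inter, Finset.mem_erase, Finset.mem_univ, and_true, true_and]
        rw [hinter]
        by_cases hmem : M p.1 lst ∈ S (g p.2)
        · left
          rw [Finset.card_erase_of_mem hmem, hScard]
          have : 1 ≤ r := by omega
          push_cast [Nat.cast_sub this]
          ring
        · right
          rw [Finset.erase_eq_of_notMem hmem, hScard]
          push_cast; ring
      have hlam : lamRC T'' = (∑ p ∈ (univ : Finset (Fin r × Fin c)),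
          ((rowSet T'' p.1 ∩ colSet T'' p.2).card : ℚ)) /
          (((univ : Finset (Fin r × Fin c)).card : ℚ)) := by
        rw [lamRC, Fintype.sum_prod_type]
        congr 1
        rw [Finset.card_univ, Fintype.card_prod, Fintype.card_fin, Fintype.card_fin]
        push_cast; ring
      have key := avg_floor_ceil (univ : Finset (Fin r × Fin c))
        ⟨(⟨0, by omega⟩, ⟨0, by omega⟩), Finset.mem_univ _⟩
        (fun p => (rowSet T'' p.1 ∩ colSet T'' p.2).card) ((r:ℤ) - 1)
        (fun p _ => hval p) (lamRC T'') hlam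
      intro i j
      exact key (i, j) (Finset.mem_univ _)
    · -- lamRR
      have hval : ∀ p : Fin r × Fin r, p.1 ≠ p.2 →
          ((rowSet T'' p.1 ∩ rowSet T'' p.2).card : ℤ) = (n:ℤ) - 2 := by
        intro p hne
        rw [hrow'', hrow'']
        have hmm : M p.1 lst ≠ M p.2 lst := hdist lst p.1 p.2 hne
        have hinter : univ.erase (M p.1 lst) ∩ univ.erase (M p.2 lst)
            = (univ.erase (M p.1 lst)).erase (M p.2 lst) := by
          ext t
          simp only [Finset.mem_inter, Finset.mem_erase, Finset.mem_univ, and_true, true_and]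
          tauto
        rw [hinter, Finset.card_erase_of_mem, Finset.card_erase_of_mem (Finset.mem_univ _),
          Finset.card_univ, Fintype.card_fin]
        · have : 3 ≤ n := hn3
          omega
        · exact Finset.mem_erase.mpr ⟨hmm.symm, Finset.mem_univ _⟩
      have hlam : lamRR T'' = (∑ p ∈ (univ : Finset (Fin r × Fin r)).filter
          (fun p => p.1 < p.2), ((rowSet T'' p.1 ∩ rowSet T'' p.2).card : ℚ)) /
          ((((univ : Finset (Fin r × Fin r)).filter (fun p => p.1 < p.2)).card : ℚ)) := by
        rw [lamRR]; congr 1; exact (card_pairs_cast r).symm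
      have hne0 : ((⟨0, by omega⟩ : Fin r), (⟨1, by omega⟩ : Fin r)) ∈
          (univ : Finset (Fin r × Fin r)).filter (fun p => p.1 < p.2) := by
        refine Finset.mem_filter.mpr ⟨Finset.mem_univ _, ?_⟩
        exact Fin.mk_lt_mk.mpr zero_lt_one
      have key := avg_floor_ceil _ ⟨_, hne0⟩
        (fun p : Fin r × Fin r => (rowSet T'' p.1 ∩ rowSet T'' p.2).card) ((n:ℤ) - 2)
        (fun p hp => Or.inl (hval p (ne_of_lt (Finset.mem_filter.mp hp).2)))
        (lamRR T'') hlam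
      intro i j hne
      rcases hne.lt_or_gt with hlt | hlt
      · exact key (i, j) (Finset.mem_filter.mpr ⟨Finset.mem_univ _, hlt⟩)
      · have := key (j, i) (Finset.mem_filter.mpr ⟨Finset.mem_univ _, hlt⟩)
        simp only at this
        rwa [Finset.inter_comm] at this
    · -- lamCC
      have hlam : lamCC T'' = (∑ p ∈ (univ : Finset (Fin c × Fin c)).filter
          (fun p => p.1 < p.2), ((colSet T'' p.1 ∩ colSet T'' p.2).card : ℚ)) /
          ((((univ : Finset (Fin c × Fin c)).filter (fun p => p.1 < p.2)).card : ℚ)) := by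
        rw [lamCC]; congr 1; exact (card_pairs_cast c).symm
      have hne0 : ((⟨0, by omega⟩ : Fin c), (⟨1, by omega⟩ : Fin c)) ∈
          (univ : Finset (Fin c × Fin c)).filter (fun p => p.1 < p.2) := by
        refine Finset.mem_filter.mpr ⟨Finset.mem_univ _, ?_⟩
        exact Fin.mk_lt_mk.mpr zero_lt_one
      have key := avg_floor_ceil _ ⟨_, hne0⟩
        (fun p : Fin c × Fin c => (colSet T'' p.1 ∩ colSet T'' p.2).card) a
        (fun p hp => by
          show ((colSet T'' p.1 ∩ colSet T'' p.2).card : ℤ) = a ∨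
            ((colSet T'' p.1 ∩ colSet T'' p.2).card : ℤ) = a + 1
          rw [hcol'', hcol'']
          exact hSS (g p.1) (g p.2)
            (fun h => (ne_of_lt (Finset.mem_filter.mp hp).2) (hginj h)))
        (lamCC T'') hlam
      intro i j hne
      rcases hne.lt_or_gt with hlt | hlt
      · exact key (i, j) (Finset.mem_filter.mpr ⟨Finset.mem_univ _, hlt⟩)
      · have := key (j, i) (Finset.mem_filter.mpr ⟨Finset.mem_univ _, hlt⟩)
        simp only at this
        rwa [Finset.inter_comm] at this
  exact hgoal

/-- If a `(k × n, n)`-near triple array exists (`1 ≤ k ≤ n − 2`),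
then `((n − k) × n, n)` and `((n − k) × (n − 1), n)`-near triple arrays exist. -/
theorem nearTripleArray_complement (k n : ℕ) (hk : 1 ≤ k) (hkn : k ≤ n - 2)
    (h : ∃ T : Fin k × Fin n → Fin n, IsNearTripleArray T) :
    (∃ T : Fin (n - k) × Fin n → Fin n, IsNearTripleArray T) ∧
    (∃ T : Fin (n - k) × Fin (n - 1) → Fin n, IsNearTripleArray T) := by
  obtain ⟨T, hbin, hequi, hRC, hRR, hCC⟩ := h
  have hn3 : 3 ≤ n := by omega
  have hNne : ((n:ℚ)) ≠ 0 := by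
    exact_mod_cast (by omega : n ≠ 0)
  have havg : avgRepl k n n = (k:ℚ) := by
    rw [avgRepl, mul_div_assoc, div_self hNne, mul_one]
  have hrepl : ∀ s, replNum T s = k := by
    intro s
    rcases hequi with ⟨-, h2⟩ | ⟨h1, -⟩
    · have := h2 s; rw [havg] at this; exact_mod_cast this
    · rw [havg] at h1; exact absurd (Rat.den_natCast k) h1
  have hcolinj : ∀ j : Fin n, Function.Injective (fun i : Fin k => T (i, j)) := by
    intro j i i' hii
    by_contra hne
    exact hbin.2 j i i' hne hii
  have hcolcard : ∀ j, (colSet T j).card = k := fun j => by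
    rw [colSet, Finset.card_image_of_injective _ (hcolinj j), Finset.card_univ,
      Fintype.card_fin]
  have hsymcols : ∀ s : Fin n, (univ.filter (fun j => s ∈ colSet T j)).card = k := by
    intro s
    have heq : replNum T s = (univ.filter (fun j : Fin n => s ∈ colSet T j)).card := by
      rw [replNum, Finset.card_filter, Fintype.sum_prod_type_right, Finset.card_filter]
      refine Finset.sum_congr rfl (fun j _ => ?_)
      rw [← Finset.card_filter]
      by_cases hmem : s ∈ colSet T j
      · rw [if_pos hmem, Finset.card_eq_one]
        obtain ⟨i, -, hi⟩ := Finset.mem_image.mp hmem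
        refine ⟨i, ?_⟩
        ext i'
        simp only [Finset.mem_filter, Finset.mem_univ, true_and, Finset.mem_singleton]
        constructor
        · intro hh; by_contra hne; exact hbin.2 j i' i hne (hh.trans hi.symm)
        · rintro rfl; exact hi
      · rw [if_neg hmem, Finset.card_eq_zero]
        ext i
        simp only [Finset.mem_filter, Finset.mem_univ, true_and, Finset.notMem_empty,
          iff_false]
        intro hTi
        exact hmem (Finset.mem_image.mpr ⟨i, Finset.mem_univ i, hTi⟩)
    rw [← heq, hrepl]
  set S : Fin n → Finset (Fin n) := fun j => (colSet T j)ᶜ with hS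
  have hScard : ∀ j, (S j).card = n - k := fun j => by
    rw [hS]
    simp only
    rw [Finset.card_compl, Fintype.card_fin, hcolcard]
  have hsymS : ∀ s : Fin n, (univ.filter (fun j => s ∈ S j)).card = n - k := by
    intro s
    have h1 := Finset.card_filter_add_card_filter_not
      (s := (univ : Finset (Fin n))) (p := fun j => s ∈ colSet T j)
    rw [Finset.card_univ, Fintype.card_fin, hsymcols s] at h1
    have h2 : univ.filter (fun j => s ∈ S j)
        = univ.filter (fun j : Fin n => ¬ (s ∈ colSet T j)) := by
      refine Finset.filter_congr (fun j _ => ?_)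
      simp [hS]
    rw [h2]
    omega
  obtain ⟨M, hbijM, hcover, hdist⟩ := decomp_of_regular (n - k) S hScard hsymS
  have hSS : ∀ (i j : Fin n), i ≠ j →
      ((S i ∩ S j).card : ℤ) = (⌊lamCC T⌋ + (n:ℤ) - 2*k) ∨
      ((S i ∩ S j).card : ℤ) = (⌊lamCC T⌋ + (n:ℤ) - 2*k) + 1 := by
    intro i j hne
    have hcompl : S i ∩ S j = (colSet T i ∪ colSet T j)ᶜ := by
      rw [hS]; exact (Finset.compl_union _ _).symm
    have hu : (colSet T i ∪ colSet T j).card + (colSet T i ∩ colSet T j).card = 2*k := by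
      rw [Finset.card_union_add_card_inter, hcolcard, hcolcard]; ring
    have hc2 : (S i ∩ S j).card = n - (colSet T i ∪ colSet T j).card := by
      rw [hcompl, Finset.card_compl, Fintype.card_fin]
    have hle : (colSet T i ∪ colSet T j).card ≤ n := by
      simpa using Finset.card_le_univ (colSet T i ∪ colSet T j)
    have hceil := Int.ceil_le_floor_add_one (lamCC T)
    have hflo := Int.floor_le_ceil (lamCC T)
    rcases hCC i j hne with hcc | hcc <;> omega
  have hmain := main_aux n (n - k) (n - 1) (by omega) (by omega) (by omega)
    S M hbijM hcover hdist hScard hsymS (⌊lamCC T⌋ + (n:ℤ) - 2*k) hSS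
  exact ⟨⟨_, hmain.1⟩, ⟨_, hmain.2⟩⟩
end

section
/- Let I be a nonempty finite set, let a : I → ℕ, let n := |I|, and let m := (Σ_{i∈I} a_i)/n as a rational number. Then Σ_{i∈I} a_i(a_i − 1)/2 ≥ S(n, m), and equality holds if and only if a_i ∈ {⌊m⌋, ⌈m⌉} for every i ∈ I. -/
open Finset

/-- `S(n, m) = n·m(m−1)/2 + n·(m − ⌊m⌋)(⌈m⌉ − m)/2`. -/
def Sfun (n : ℕ) (m : ℚ) : ℚ :=
  (n : ℚ) * (m * (m - 1)) / 2 + (n : ℚ) * ((m - (⌊m⌋ : ℚ)) * ((⌈m⌉ : ℚ) - m)) / 2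

/-- For nonnegative integers `a_i` with average `m`,
`Σ a_i(a_i − 1)/2 ≥ S(n, m)`, with equality iff every `a_i ∈ {⌊m⌋, ⌈m⌉}`. -/
theorem binom_sum_ge_Sfun {I : Type*} [Fintype I] [Nonempty I]
    (a : I → ℕ) (m : ℚ)
    (hm : m = (∑ i : I, (a i : ℚ)) / (Fintype.card I : ℚ)) :
    Sfun (Fintype.card I) m ≤ ∑ i : I, (a i : ℚ) * ((a i : ℚ) - 1) / 2 ∧
    ((∑ i : I, (a i : ℚ) * ((a i : ℚ) - 1) / 2) = Sfun (Fintype.card I) m ↔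
      ∀ i : I, (a i : ℤ) = ⌊m⌋ ∨ (a i : ℤ) = ⌈m⌉) := by
  have hn0 : ((Fintype.card I : ℚ)) ≠ 0 := by
    exact_mod_cast (Fintype.card_pos (α := I)).ne'
  set f : ℚ := (⌊m⌋ : ℚ) with hf
  set c : ℚ := (⌈m⌉ : ℚ) with hc
  have hT : (Fintype.card I : ℚ) * m = ∑ i : I, (a i : ℚ) := by
    rw [hm]; field_simp
  -- key identity
  have key : (∑ i : I, (a i : ℚ) * ((a i : ℚ) - 1) / 2) - Sfun (Fintype.card I) m
      = (∑ i : I, ((a i : ℚ) - f) * ((a i : ℚ) - c)) / 2 := by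
    have hsum : ∑ i : I, ((a i : ℚ) - f) * ((a i : ℚ) - c)
        = (∑ i : I, (a i : ℚ) * ((a i : ℚ) - 1))
          - ((f + c - 1) * (∑ i : I, (a i : ℚ)) - (Fintype.card I : ℚ) * (f * c)) := by
      rw [Finset.mul_sum]
      have hconst : ((Fintype.card I : ℚ)) * (f * c) = ∑ _i : I, f * c := by
        rw [Finset.sum_const, Finset.card_univ, nsmul_eq_mul]
      rw [hconst, ← Finset.sum_sub_distrib, ← Finset.sum_sub_distrib]
      exact Finset.sum_congr rfl fun i _ => by ring
    rw [← Finset.sum_div, hsum, ← hT]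
    unfold Sfun
    rw [← hf, ← hc]
    ring
  -- pointwise nonnegativity over ℤ
  have hpt : ∀ x : ℤ, 0 ≤ (x - ⌊m⌋) * (x - ⌈m⌉) := by
    intro x
    have hfc : ⌊m⌋ ≤ ⌈m⌉ := Int.floor_le_ceil m
    have hc1 : ⌈m⌉ ≤ ⌊m⌋ + 1 := Int.ceil_le_floor_add_one m
    rcases le_or_gt x ⌊m⌋ with h | h
    · nlinarith [mul_nonneg (by omega : (0:ℤ) ≤ ⌊m⌋ - x) (by omega : (0:ℤ) ≤ ⌈m⌉ - x)]
    · exact mul_nonneg (by omega) (by omega)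
  have hcast : ∀ i : I, ((a i : ℚ) - f) * ((a i : ℚ) - c)
      = ((((a i : ℤ) - ⌊m⌋) * ((a i : ℤ) - ⌈m⌉) : ℤ) : ℚ) := by
    intro i; push_cast [hf, hc]; ring
  have hnonneg : ∀ i ∈ Finset.univ (α := I), (0 : ℚ) ≤ ((a i : ℚ) - f) * ((a i : ℚ) - c) := by
    intro i _
    rw [hcast i]
    exact_mod_cast hpt (a i)
  have hsumnn : (0 : ℚ) ≤ ∑ i : I, ((a i : ℚ) - f) * ((a i : ℚ) - c) :=
    Finset.sum_nonneg hnonneg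
  constructor
  · nlinarith [key, hsumnn]
  · constructor
    · intro heq
      have hzero : ∑ i : I, ((a i : ℚ) - f) * ((a i : ℚ) - c) = 0 := by
        have : ((∑ i : I, ((a i : ℚ) - f) * ((a i : ℚ) - c)) / 2) = 0 := by
          rw [← key, heq]; ring
        linarith [this]
      intro i
      have := (Finset.sum_eq_zero_iff_of_nonneg hnonneg).1 hzero i (Finset.mem_univ i)
      rw [hcast i] at this
      have hz : (((a i : ℤ) - ⌊m⌋) * ((a i : ℤ) - ⌈m⌉)) = 0 := by exact_mod_cast this
      rcases mul_eq_zero.1 hz with h | h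
      · left; omega
      · right; omega
    · intro hall
      have hzero : ∑ i : I, ((a i : ℚ) - f) * ((a i : ℚ) - c) = 0 := by
        apply Finset.sum_eq_zero
        intro i _
        rw [hcast i]
        rcases hall i with h | h <;> simp [h]
      linarith [key, hzero]
end

section
/- Let T be an (r × c, v)-near triple array with 2 ≤ r, 2 ≤ c, 2 ≤ v and max(r,c) ≤ v ≤ rc, with parameters e = rc/v and λ_cc, and let μ_c := e(r − 1)/(v − 1). Then S(c(c−1)/2, λ_cc) ≥ S(v(v−1)/2, μ_c), and equality holds if and only if for every pair of distinct symbols a, b, the number of columns of T containing both a and b is ⌊μ_c⌋ or ⌈μ_c⌉. -/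
open Finset

/-- The number of rows containing both symbols `a` and `b`. -/
def rowPairCount {r c v : ℕ} (T : Fin r × Fin c → Fin v) (a b : Fin v) : ℕ :=
  (Finset.univ.filter (fun i : Fin r => a ∈ rowSet T i ∧ b ∈ rowSet T i)).card

/-- The number of columns containing both symbols `a` and `b`. -/
def colPairCount {r c v : ℕ} (T : Fin r × Fin c → Fin v) (a b : Fin v) : ℕ :=
  (Finset.univ.filter (fun j : Fin c => a ∈ colSet T j ∧ b ∈ colSet T j)).card

/-- The average covering number `μ = e(r + c − 2)/(v − 1)`. -/
def muGrid (r c v : ℕ) : ℚ :=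
  avgRepl r c v * ((r : ℚ) + (c : ℚ) - 2) / ((v : ℚ) - 1)

/-! Count the pairs (column pair, symbol pair) in which both symbols lie in both columns. Doing
so column pair by column pair and symbol pair by symbol pair gives
`∑_{i<j} C(|C_i ∩ C_j|, 2) = ∑_{a<b} C(λ_ab, 2)`, where `λ_ab` is the number of columns containing
`a` and `b`. For natural numbers `x_p` with mean `m`,
`∑ C(x_p, 2) = S(n, m) + ∑ (x_p - ⌊m⌋)(x_p - ⌈m⌉)/2`, and each term of the last sum is
nonnegative, vanishing exactly when `x_p ∈ {⌊m⌋, ⌈m⌉}`. In a near triple array the column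
intersections take only these two values, so the left-hand count is `S(c(c-1)/2, λ_cc)`, while
the `λ_ab` have mean `c·C(r, 2)/C(v, 2) = μ_c` because every column holds `r` distinct symbols. -/

section DoubleCounting

variable {ι α : Type*} [Fintype ι] [Fintype α] [LinearOrder α]

theorem sum_card_pairs_covered_eq_sum_choose_two (B : ι → Finset α) :
    ∑ q ∈ univ.filter (fun q : α × α => q.1 < q.2), #{i | q.1 ∈ B i ∧ q.2 ∈ B i}
      = ∑ i, (#(B i)).choose 2 := by
  simp_rw [← card_product_filter_lt]
  refine (sum_card_bipartiteAbove_eq_sum_card_bipartiteBelow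
    (fun i (q : α × α) => q.1 ∈ B i ∧ q.2 ∈ B i)).symm.trans (sum_congr rfl fun i _ => ?_)
  congr 1
  ext q
  simp only [mem_bipartiteAbove, mem_filter, mem_univ, true_and, mem_product]
  tauto

theorem sum_choose_two_card_inter_eq_sum_choose_two_card_covered [LinearOrder ι]
    (B : ι → Finset α) :
    ∑ p ∈ univ.filter (fun p : ι × ι => p.1 < p.2), (#(B p.1 ∩ B p.2)).choose 2
      = ∑ q ∈ univ.filter (fun q : α × α => q.1 < q.2),
          (#{i | q.1 ∈ B i ∧ q.2 ∈ B i}).choose 2 := by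
  simp_rw [← card_product_filter_lt]
  refine (sum_congr rfl fun p _ => ?_).trans
    ((sum_card_bipartiteAbove_eq_sum_card_bipartiteBelow
      (fun (p : ι × ι) (q : α × α) =>
        (q.1 ∈ B p.1 ∧ q.2 ∈ B p.1) ∧ q.1 ∈ B p.2 ∧ q.2 ∈ B p.2)).trans
      (sum_congr rfl fun q _ => ?_))
  all_goals
    congr 1
    ext
    simp only [mem_bipartiteAbove, mem_bipartiteBelow, mem_filter, mem_univ, true_and,
      mem_product, mem_inter]
    tauto

end DoubleCounting

theorem card_filter_fst_lt_snd (n : ℕ) :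
    #(univ.filter (fun p : Fin n × Fin n => p.1 < p.2)) = n * (n - 1) / 2 := by
  rw [← univ_product_univ, card_product_filter_lt, card_univ, Fintype.card_fin,
    Nat.choose_two_right]

theorem sub_floor_mul_sub_ceil_nonneg (m : ℚ) (z : ℤ) :
    0 ≤ ((z : ℚ) - ⌊m⌋) * ((z : ℚ) - ⌈m⌉) := by
  have := Int.ceil_le_floor_add_one m
  have := Int.floor_le_ceil m
  norm_cast
  rcases le_or_gt z ⌊m⌋ with h | h
  · exact mul_nonneg_of_nonpos_of_nonpos (by omega) (by omega)
  · exact mul_nonneg (by omega) (by omega)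

theorem sub_floor_mul_sub_ceil_eq_zero_iff (m : ℚ) (z : ℤ) :
    ((z : ℚ) - ⌊m⌋) * ((z : ℚ) - ⌈m⌉) = 0 ↔ z = ⌊m⌋ ∨ z = ⌈m⌉ := by
  norm_cast
  rw [mul_eq_zero, sub_eq_zero, sub_eq_zero]

theorem sum_choose_two_eq_sum_sub_floor_mul_sub_ceil_add_Sfun {κ : Type*} (P : Finset κ) (g : κ → ℕ)
    (m : ℚ) (hm : ∑ p ∈ P, (g p : ℚ) = #P * m) :
    ∑ p ∈ P, ((g p).choose 2 : ℚ)
      = ∑ p ∈ P, ((g p : ℚ) - ⌊m⌋) * ((g p : ℚ) - ⌈m⌉) / 2 + Sfun #P m := by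
  have hsplit : ∀ p ∈ P, ((g p).choose 2 : ℚ)
      = ((g p : ℚ) - ⌊m⌋) * ((g p : ℚ) - ⌈m⌉) / 2
        + ((g p : ℚ) * (⌊m⌋ + ⌈m⌉ - 1) - ⌊m⌋ * ⌈m⌉) / 2 := fun p _ => by
    rw [Nat.cast_choose_two]; ring
  rw [sum_congr rfl hsplit, sum_add_distrib, add_right_inj, ← sum_div, sum_sub_distrib,
    ← sum_mul, hm, sum_const, nsmul_eq_mul, Sfun]
  ring

theorem Sfun_card_le_sum_choose_two {κ : Type*} (P : Finset κ) (g : κ → ℕ) (m : ℚ)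
    (hm : ∑ p ∈ P, (g p : ℚ) = #P * m) :
    Sfun #P m ≤ ∑ p ∈ P, ((g p).choose 2 : ℚ) ∧
      (∑ p ∈ P, ((g p).choose 2 : ℚ) = Sfun #P m ↔
        ∀ p ∈ P, (g p : ℤ) = ⌊m⌋ ∨ (g p : ℤ) = ⌈m⌉) := by
  have hgap : ∀ p ∈ P, 0 ≤ ((g p : ℚ) - ⌊m⌋) * ((g p : ℚ) - ⌈m⌉) / 2 := fun p _ =>
    div_nonneg (by exact_mod_cast sub_floor_mul_sub_ceil_nonneg m (g p)) zero_le_two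
  rw [sum_choose_two_eq_sum_sub_floor_mul_sub_ceil_add_Sfun P g m hm, add_eq_right,
    sum_eq_zero_iff_of_nonneg hgap]
  refine ⟨le_add_of_nonneg_left (sum_nonneg hgap), forall₂_congr fun p _ => ?_⟩
  rw [div_eq_zero_iff, or_iff_left two_ne_zero, ← sub_floor_mul_sub_ceil_eq_zero_iff m (g p)]
  push_cast
  rfl

section NearTripleArray

variable {r c v : ℕ} (T : Fin r × Fin c → Fin v)

theorem colPairCount_comm (a b : Fin v) : colPairCount T a b = colPairCount T b a := by
  simp only [colPairCount, and_comm]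

theorem card_colSet (hT : IsBinaryDesign T) (j : Fin c) : #(colSet T j) = r := by
  rw [colSet, card_image_of_injective _ fun i i' h => not_not.1 fun hne => hT.2 j i i' hne h,
    card_univ, Fintype.card_fin]

theorem sum_colPairCount (hT : IsBinaryDesign T) :
    ∑ q ∈ univ.filter (fun q : Fin v × Fin v => q.1 < q.2), colPairCount T q.1 q.2
      = c * r.choose 2 := by
  simp only [colPairCount, sum_card_pairs_covered_eq_sum_choose_two, card_colSet T hT,
    sum_const, card_univ, Fintype.card_fin, smul_eq_mul]

theorem sum_choose_two_card_colSet_inter_eq_sum_choose_two_colPairCount :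
    ∑ p ∈ univ.filter (fun p : Fin c × Fin c => p.1 < p.2),
        (#(colSet T p.1 ∩ colSet T p.2)).choose 2
      = ∑ q ∈ univ.filter (fun q : Fin v × Fin v => q.1 < q.2),
          (colPairCount T q.1 q.2).choose 2 :=
  sum_choose_two_card_inter_eq_sum_choose_two_card_covered (colSet T)

end NearTripleArray

theorem nearTripleArray_column_design_bound_general {r c v : ℕ} (hc : 2 ≤ c) (hv0 : 2 ≤ v)
    (T : Fin r × Fin c → Fin v) (hT : IsNearTripleArray T)
    (μc : ℚ) (hμ : μc = avgRepl r c v * ((r : ℚ) - 1) / ((v : ℚ) - 1)) :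
    Sfun (v * (v - 1) / 2) μc ≤ Sfun (c * (c - 1) / 2) (lamCC T) ∧
    (Sfun (c * (c - 1) / 2) (lamCC T) = Sfun (v * (v - 1) / 2) μc ↔
      ∀ a b : Fin v, a ≠ b →
        (colPairCount T a b : ℤ) = ⌊μc⌋ ∨ (colPairCount T a b : ℤ) = ⌈μc⌉) := by
  obtain ⟨hbin, -, -, -, hcc⟩ := hT
  set Pc := univ.filter (fun p : Fin c × Fin c => p.1 < p.2)
  set Pv := univ.filter (fun q : Fin v × Fin v => q.1 < q.2)
  have hPc : (#Pc : ℚ) = c * (c - 1) / 2 := by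
    rw [card_filter_fst_lt_snd, ← Nat.choose_two_right, Nat.cast_choose_two]
  have hPv : (#Pv : ℚ) = v * (v - 1) / 2 := by
    rw [card_filter_fst_lt_snd, ← Nat.choose_two_right, Nat.cast_choose_two]
  have hc' : (2 : ℚ) ≤ c := by exact_mod_cast hc
  have hv' : (2 : ℚ) ≤ v := by exact_mod_cast hv0
  have hv_pos : (0 : ℚ) < v - 1 := by linarith
  have hmean_c : ∑ p ∈ Pc, (#(colSet T p.1 ∩ colSet T p.2) : ℚ) = #Pc * lamCC T := by
    rw [lamCC, hPc, mul_div_cancel₀ _ (by nlinarith)]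
  have hmean_v : ∑ q ∈ Pv, (colPairCount T q.1 q.2 : ℚ) = #Pv * μc := by
    rw [← Nat.cast_sum, sum_colPairCount T hbin, hPv, hμ, avgRepl]
    push_cast [Nat.cast_choose_two]
    field_simp [hv_pos.ne']
  have hcols := (Sfun_card_le_sum_choose_two Pc _ _ hmean_c).2.2 fun p hp =>
    hcc p.1 p.2 (mem_filter.1 hp).2.ne
  have hsyms := Sfun_card_le_sum_choose_two Pv _ _ hmean_v
  rw [← card_filter_fst_lt_snd, ← card_filter_fst_lt_snd, ← hcols,
    ← Nat.cast_sum, sum_choose_two_card_colSet_inter_eq_sum_choose_two_colPairCount, Nat.cast_sum, hsyms.2]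
  refine ⟨hsyms.1, ⟨fun h a b hab => ?_, fun h q hq => h q.1 q.2 (mem_filter.1 hq).2.ne⟩⟩
  rcases hab.lt_or_gt with hab | hab
  · exact h (a, b) (mem_filter.2 ⟨mem_univ _, hab⟩)
  · rw [colPairCount_comm]
    exact h (b, a) (mem_filter.2 ⟨mem_univ _, hab⟩)

/-- For an `(r × c, v)`-near triple array with `μ_c = e(r−1)/(v−1)`,
`S(c(c−1)/2, λ_cc) ≥ S(v(v−1)/2, μ_c)`, with equality iff every pair of distinct
symbols is covered by `⌊μ_c⌋` or `⌈μ_c⌉` columns. -/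
theorem nearTripleArray_column_design_bound {r c v : ℕ} (hr : 2 ≤ r) (hc : 2 ≤ c)
    (hv0 : 2 ≤ v) (hv1 : max r c ≤ v) (hv2 : v ≤ r * c)
    (T : Fin r × Fin c → Fin v) (hT : IsNearTripleArray T)
    (μc : ℚ) (hμ : μc = avgRepl r c v * ((r : ℚ) - 1) / ((v : ℚ) - 1)) :
    Sfun (v * (v - 1) / 2) μc ≤ Sfun (c * (c - 1) / 2) (lamCC T) ∧
    (Sfun (c * (c - 1) / 2) (lamCC T) = Sfun (v * (v - 1) / 2) μc ↔
      ∀ a b : Fin v, a ≠ b →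
        (colPairCount T a b : ℤ) = ⌊μc⌋ ∨ (colPairCount T a b : ℤ) = ⌈μc⌉) :=
  nearTripleArray_column_design_bound_general hc hv0 T hT μc hμ
end

section
/- For every natural number r ≥ 4, there is no (r × (r(r − 1) − 1), r(r − 1) + 1)-near triple array. -/
open Finset

/- ### Auxiliary lemmas -/

lemma NTA.sum_card_swap {α β : Type*} (X : Finset α) (Y : Finset β) (P : α → β → Prop)
    [∀ a b, Decidable (P a b)] :
    ∑ x ∈ X, (Y.filter fun y => P x y).card = ∑ y ∈ Y, (X.filter fun x => P x y).card := by
  simp only [Finset.card_filter]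
  exact Finset.sum_comm

lemma NTA.cnat (k : ℕ) : (k+4) * (k+4-1) - 1 = k*k+7*k+11 := by
  have h : k+4-1 = k+3 := by omega
  rw [h]
  have : (k+4)*(k+3) = k*k+7*k+12 := by ring
  omega

lemma NTA.vnat (k : ℕ) : (k+4) * (k+4-1) + 1 = k*k+7*k+13 := by
  have h : k+4-1 = k+3 := by omega
  rw [h]
  have : (k+4)*(k+3) = k*k+7*k+12 := by ring
  omega

lemma NTA.avg_lb (k : ℕ) :
    ((k:ℚ)+3) < avgRepl (k+4) ((k+4)*(k+4-1)-1) ((k+4)*(k+4-1)+1) := by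
  rw [avgRepl, NTA.cnat k, NTA.vnat k]
  rw [lt_div_iff₀ (by positivity)]
  push_cast
  have h0 : (0:ℚ) ≤ (k:ℚ) := by positivity
  nlinarith [h0]

lemma NTA.avg_ub (k : ℕ) :
    avgRepl (k+4) ((k+4)*(k+4-1)-1) ((k+4)*(k+4-1)+1) < (k:ℚ)+4 := by
  rw [avgRepl, NTA.cnat k, NTA.vnat k]
  rw [div_lt_iff₀ (by positivity)]
  push_cast
  have h0 : (0:ℚ) ≤ (k:ℚ) := by positivity
  nlinarith [h0]

lemma NTA.avg_floor (k : ℕ) :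
    ⌊avgRepl (k+4) ((k+4)*(k+4-1)-1) ((k+4)*(k+4-1)+1)⌋ = (k:ℤ)+3 := by
  rw [Int.floor_eq_iff]
  refine ⟨le_of_lt ?_, ?_⟩
  · have := NTA.avg_lb k; push_cast at this ⊢; linarith
  · have := NTA.avg_ub k; push_cast at this ⊢; linarith

lemma NTA.avg_ceil (k : ℕ) :
    ⌈avgRepl (k+4) ((k+4)*(k+4-1)-1) ((k+4)*(k+4-1)+1)⌉ = (k:ℤ)+4 := by
  rw [Int.ceil_eq_iff]
  constructor
  · have := NTA.avg_lb k; push_cast at this ⊢; linarith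
  · have := NTA.avg_ub k; push_cast at this ⊢; linarith

lemma NTA.avg_den (k : ℕ) :
    (avgRepl (k+4) ((k+4)*(k+4-1)-1) ((k+4)*(k+4-1)+1)).den ≠ 1 := by
  intro h
  set q := avgRepl (k+4) ((k+4)*(k+4-1)-1) ((k+4)*(k+4-1)+1) with hq
  have hnum : (q.num : ℚ) = q := by exact_mod_cast Rat.den_eq_one_iff q |>.mp h
  have h1 := NTA.avg_lb k
  have h2 := NTA.avg_ub k
  rw [← hq, ← hnum] at h1 h2
  have h1' : (k:ℤ) + 3 < q.num := by exact_mod_cast h1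
  have h2' : q.num < (k:ℤ) + 4 := by exact_mod_cast h2
  omega

section Aux
variable {r c v : ℕ} (T : Fin r × Fin c → Fin v)
  (hBc : ∀ (j : Fin c) (i i' : Fin r), i ≠ i' → T (i, j) ≠ T (i', j))

include hBc in
lemma NTA.colSet_card (j : Fin c) : (colSet T j).card = r := by
  rw [colSet, Finset.card_image_of_injOn, Finset.card_univ, Fintype.card_fin]
  intro i _ i' _ h
  by_contra hne
  exact hBc j i i' hne h

include hBc in
lemma NTA.fiber_card (s : Fin v) (j : Fin c) :
    (univ.filter fun i => T (i, j) = s).card = if s ∈ colSet T j then 1 else 0 := by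
  split_ifs with h
  · simp only [colSet, Finset.mem_image, Finset.mem_univ, true_and] at h
    obtain ⟨i, hi⟩ := h
    have : (univ.filter fun i' => T (i', j) = s) = {i} := by
      ext i'
      simp only [Finset.mem_filter, Finset.mem_univ, true_and, Finset.mem_singleton]
      constructor
      · intro h'
        by_contra hne
        exact hBc j i' i hne (h'.trans hi.symm)
      · rintro rfl; exact hi
    rw [this, Finset.card_singleton]
  · rw [Finset.card_eq_zero, Finset.filter_eq_empty_iff]
    intro i _
    exact fun he => h (Finset.mem_image.mpr ⟨i, Finset.mem_univ _, he⟩)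

include hBc in
lemma NTA.replNum_eq_m (s : Fin v) :
    replNum T s = (univ.filter fun j => s ∈ colSet T j).card := by
  rw [replNum, Finset.card_filter, Fintype.sum_prod_type, Finset.sum_comm,
    Finset.card_filter]
  refine Finset.sum_congr rfl fun j _ => ?_
  rw [← Finset.card_filter, NTA.fiber_card T hBc]

lemma NTA.sum_replNum : ∑ s : Fin v, replNum T s = r * c := by
  have := Finset.card_eq_sum_card_fiberwise (f := T) (s := univ) (t := univ)
    (fun x _ => Finset.mem_univ _)
  simp only [Finset.card_univ, Fintype.card_prod, Fintype.card_fin] at this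
  rw [this]
  rfl

end Aux

set_option maxHeartbeats 2000000 in
/-- For `r ≥ 4`, there is no
`(r × (r(r − 1) − 1), r(r − 1) + 1)`-near triple array. -/
theorem no_nearTripleArray_column (r : ℕ) (hr : 4 ≤ r) :
    ¬ ∃ T : Fin r × Fin (r * (r - 1) - 1) → Fin (r * (r - 1) + 1),
      IsNearTripleArray T := by
  rintro ⟨T, ⟨hBr, hBc⟩, hRepl, hRC, hRR, hCC⟩
  clear hBr hRC hRR
  obtain ⟨k, rfl⟩ : ∃ k, r = k + 4 := ⟨r - 4, by omega⟩
  clear hr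
  -- the multiplicity function (number of columns containing a symbol)
  set m : Fin ((k+4) * (k+4-1) + 1) → ℕ :=
    fun s => (univ.filter fun j => s ∈ colSet T j).card with hmdef
  -- every symbol occurs in k+3 or k+4 columns
  have hrep : ∀ s, m s = k+3 ∨ m s = k+4 := by
    intro s
    have hm := NTA.replNum_eq_m T hBc s
    rcases hRepl with h | h
    · exact absurd h.1 (NTA.avg_den k)
    · rcases h.2 s with h' | h'
      · left
        rw [NTA.avg_floor k] at h'
        rw [hmdef]; simp only [← hm]
        omega
      · right
        rw [NTA.avg_ceil k] at h'
        rw [hmdef]; simp only [← hm]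
        omega
  -- total number of cells
  have hsumm : ∑ s, m s = (k+4) * (k*k+7*k+11) := by
    have h1 : ∑ s, m s = ∑ s, replNum T s :=
      Finset.sum_congr rfl fun s _ => (NTA.replNum_eq_m T hBc s).symm
    rw [h1, NTA.sum_replNum, NTA.cnat]
  -- the set of deficient symbols
  set D : Finset (Fin ((k+4) * (k+4-1) + 1)) :=
    univ.filter fun s => m s = k+3 with hDdef
  have hDcard : D.card = 2*k+8 := by
    have hsplit : ∑ s, (m s + if m s = k+3 then 1 else 0) = ∑ _s : Fin ((k+4) * (k+4-1) + 1), (k+4) := by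
      refine Finset.sum_congr rfl fun s _ => ?_
      rcases hrep s with h | h <;> rw [h] <;> split_ifs <;> omega
    rw [Finset.sum_add_distrib] at hsplit
    have hcard : ∑ s, (if m s = k+3 then 1 else 0) = D.card := by
      rw [hDdef, Finset.card_filter]
    have hconst : ∑ _s : Fin ((k+4) * (k+4-1) + 1), (k+4) = (k*k+7*k+13) * (k+4) := by
      rw [Finset.sum_const, Finset.card_univ, Fintype.card_fin, NTA.vnat, smul_eq_mul]
    rw [hsumm, hcard, hconst] at hsplit
    have hring : (k*k+7*k+13) * (k+4) = (k+4) * (k*k+7*k+11) + (2*k+8) := by ring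
    omega
  -- intersection as a filter over all symbols
  have hint : ∀ a b, (colSet T a ∩ colSet T b).card
      = (univ.filter fun s => s ∈ colSet T a ∧ s ∈ colSet T b).card := by
    intro a b; congr 1; ext s; simp [Finset.mem_inter]
  -- the off-diagonal sum of column intersection sizes
  set Sod := ∑ p ∈ (univ : Finset (Fin ((k+4) * (k+4-1) - 1))).offDiag,
      (colSet T p.1 ∩ colSet T p.2).card with hSoddef
  have hSod_m : Sod = ∑ s, (m s * m s - m s) := by
    rw [hSoddef]
    rw [Finset.sum_congr rfl (fun p _ => hint p.1 p.2),
      NTA.sum_card_swap ((univ : Finset (Fin ((k+4) * (k+4-1) - 1))).offDiag) univ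
        (fun p s => s ∈ colSet T p.1 ∧ s ∈ colSet T p.2)]
    refine Finset.sum_congr rfl fun s _ => ?_
    have h2 : ((univ : Finset (Fin ((k+4) * (k+4-1) - 1))).offDiag.filter
        fun p => s ∈ colSet T p.1 ∧ s ∈ colSet T p.2)
        = (univ.filter fun j => s ∈ colSet T j).offDiag := by
      ext p
      simp only [Finset.mem_filter, Finset.mem_offDiag, Finset.mem_univ, true_and]
      tauto
    rw [h2, Finset.offDiag_card]
  have hSodval : Sod = (2*k+8)*(k*k+5*k+6) + (k*k+5*k+5)*(k*k+7*k+12) := by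
    rw [hSod_m, ← Finset.sum_filter_add_sum_filter_not univ (fun s => m s = k+3)]
    have hD1 : ∑ s ∈ univ.filter (fun s => m s = k+3), (m s * m s - m s)
        = (2*k+8)*(k*k+5*k+6) := by
      have h3 : ∀ s ∈ univ.filter (fun s => m s = k+3), m s * m s - m s = k*k+5*k+6 := by
        intro s hs
        rw [Finset.mem_filter] at hs
        rw [hs.2]
        exact Nat.sub_eq_of_eq_add (by ring)
      rw [Finset.sum_congr rfl h3, Finset.sum_const, smul_eq_mul, ← hDdef, hDcard]
    have hcard2 : (univ.filter (fun s => ¬ m s = k+3)).card = k*k+5*k+5 := by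
      have h5 := Finset.card_filter_add_card_filter_not
        (s := (univ : Finset (Fin ((k+4) * (k+4-1) + 1)))) (p := fun s => m s = k+3)
      have e : (univ.filter (fun s => m s = k+3)).card = 2*k+8 := by
        rw [← hDdef]; exact hDcard
      have hv : (univ : Finset (Fin ((k+4) * (k+4-1) + 1))).card = k*k+7*k+13 := by
        rw [Finset.card_univ, Fintype.card_fin, NTA.vnat]
      omega
    have hD2 : ∑ s ∈ univ.filter (fun s => ¬ m s = k+3), (m s * m s - m s)
        = (k*k+5*k+5)*(k*k+7*k+12) := by
      have h4 : ∀ s ∈ univ.filter (fun s => ¬ m s = k+3), m s * m s - m s = k*k+7*k+12 := by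
        intro s hs
        rw [Finset.mem_filter] at hs
        have h6 := hrep s
        have hm4 : m s = k+4 := by tauto
        rw [hm4]
        exact Nat.sub_eq_of_eq_add (by ring)
      rw [Finset.sum_congr rfl h4, Finset.sum_const, smul_eq_mul, hcard2]
    rw [hD1, hD2]
  -- the sum over pairs with p.1 < p.2
  set Slt := ∑ p ∈ (univ : Finset (Fin ((k+4) * (k+4-1) - 1) × Fin ((k+4) * (k+4-1) - 1))).filter
      (fun p => p.1 < p.2), (colSet T p.1 ∩ colSet T p.2).card with hSltdef
  have hSltSod : Sod = Slt + Slt := by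
    have hod : (univ : Finset (Fin ((k+4) * (k+4-1) - 1))).offDiag
        = (univ : Finset (Fin ((k+4) * (k+4-1) - 1) × Fin ((k+4) * (k+4-1) - 1))).filter
          (fun p => p.1 ≠ p.2) := by
      ext p; simp [Finset.mem_offDiag]
    have hsplit2 := Finset.sum_filter_add_sum_filter_not
      ((univ : Finset (Fin ((k+4) * (k+4-1) - 1) × Fin ((k+4) * (k+4-1) - 1))).filter
        (fun p => p.1 ≠ p.2)) (fun p => p.1 < p.2)
      (fun p => (colSet T p.1 ∩ colSet T p.2).card)
    have he1 : ((univ : Finset (Fin ((k+4) * (k+4-1) - 1) × Fin ((k+4) * (k+4-1) - 1))).filter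
        (fun p => p.1 ≠ p.2)).filter (fun p => p.1 < p.2)
        = (univ : Finset (Fin ((k+4) * (k+4-1) - 1) × Fin ((k+4) * (k+4-1) - 1))).filter
          (fun p => p.1 < p.2) := by
      ext p
      simp only [Finset.mem_filter, Finset.mem_univ, true_and]
      exact ⟨fun h => h.2, fun h => ⟨ne_of_lt h, h⟩⟩
    have he2 : ((univ : Finset (Fin ((k+4) * (k+4-1) - 1) × Fin ((k+4) * (k+4-1) - 1))).filter
        (fun p => p.1 ≠ p.2)).filter (fun p => ¬ p.1 < p.2)
        = (univ : Finset (Fin ((k+4) * (k+4-1) - 1) × Fin ((k+4) * (k+4-1) - 1))).filter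
          (fun p => p.2 < p.1) := by
      ext p
      simp only [Finset.mem_filter, Finset.mem_univ, true_and]
      constructor
      · rintro ⟨h1, h2⟩
        exact (le_of_not_gt h2).lt_of_ne h1.symm
      · intro h
        exact ⟨h.ne', not_lt_of_gt h⟩
    have hswap : ∑ p ∈ (univ : Finset (Fin ((k+4) * (k+4-1) - 1) × Fin ((k+4) * (k+4-1) - 1))).filter
          (fun p => p.2 < p.1), (colSet T p.1 ∩ colSet T p.2).card
        = ∑ p ∈ (univ : Finset (Fin ((k+4) * (k+4-1) - 1) × Fin ((k+4) * (k+4-1) - 1))).filter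
          (fun p => p.1 < p.2), (colSet T p.1 ∩ colSet T p.2).card := by
      refine Finset.sum_nbij' (i := Prod.swap) (j := Prod.swap) ?_ ?_ ?_ ?_ ?_
      · intro p hp
        simp only [Finset.mem_filter, Finset.mem_univ, true_and] at hp ⊢
        exact hp
      · intro p hp
        simp only [Finset.mem_filter, Finset.mem_univ, true_and] at hp ⊢
        exact hp
      · intro p _; rfl
      · intro p _; rfl
      · intro p _
        rw [Finset.inter_comm]
        rfl
    rw [hSoddef, hod, ← hsplit2, he1, he2, hswap]
  -- lamCC is strictly between 0 and 1
  have hlam : lamCC T = (Slt : ℚ) /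
      (((k:ℚ)*(k:ℚ)+7*(k:ℚ)+11) * (((k:ℚ)*(k:ℚ)+7*(k:ℚ)+11) - 1) / 2) := by
    rw [lamCC]
    have hnum : (∑ p ∈ (univ : Finset (Fin ((k+4) * (k+4-1) - 1) × Fin ((k+4) * (k+4-1) - 1))).filter
        (fun p => p.1 < p.2), ((colSet T p.1 ∩ colSet T p.2).card : ℚ)) = (Slt : ℚ) := by
      rw [hSltdef]; push_cast; rfl
    have hcastc : ((((k+4) * (k+4-1) - 1 : ℕ)) : ℚ) = (k:ℚ)*(k:ℚ)+7*(k:ℚ)+11 := by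
      rw [NTA.cnat]; push_cast; ring
    rw [hnum, hcastc]
  have h2Slt : 2 * Slt + 2 = (k*k+7*k+11) * (k*k+7*k+10) := by
    have hq : (2*k+8)*(k*k+5*k+6) + (k*k+5*k+5)*(k*k+7*k+12) + 2
        = (k*k+7*k+11) * (k*k+7*k+10) := by ring
    omega
  have hSltpos : 0 < Slt := by
    have hge : 11 * 10 ≤ (k*k+7*k+11) * (k*k+7*k+10) :=
      Nat.mul_le_mul (Nat.le_add_left 11 _) (Nat.le_add_left 10 _)
    omega
  have hden_pos : (0:ℚ) < ((k:ℚ)*(k:ℚ)+7*(k:ℚ)+11) * (((k:ℚ)*(k:ℚ)+7*(k:ℚ)+11) - 1) / 2 := by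
    have h0 : (0:ℚ) ≤ (k:ℚ) := Nat.cast_nonneg k
    have h1 : (0:ℚ) < (k:ℚ)*(k:ℚ)+7*(k:ℚ)+11 := by nlinarith
    have h2 : (0:ℚ) < ((k:ℚ)*(k:ℚ)+7*(k:ℚ)+11) - 1 := by nlinarith
    have h3 := mul_pos h1 h2
    linarith
  have hlam_pos : 0 < lamCC T := by
    rw [hlam]
    exact div_pos (by exact_mod_cast hSltpos) hden_pos
  have hlam_lt1 : lamCC T < 1 := by
    rw [hlam, div_lt_one hden_pos]
    have hQ : 2*(Slt:ℚ) + 2 = ((k:ℚ)*(k:ℚ)+7*(k:ℚ)+11)*((k:ℚ)*(k:ℚ)+7*(k:ℚ)+10) := by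
      exact_mod_cast h2Slt
    nlinarith [hQ]
  have hfloor0 : ⌊lamCC T⌋ = 0 := by
    rw [Int.floor_eq_zero_iff]
    exact ⟨le_of_lt hlam_pos, hlam_lt1⟩
  have hceil1 : ⌈lamCC T⌉ = 1 := by
    rw [Int.ceil_eq_iff]
    constructor
    · push_cast; linarith
    · push_cast; linarith
  have hle1 : ∀ a b, a ≠ b → (colSet T a ∩ colSet T b).card ≤ 1 := by
    intro a b hab
    rcases hCC a b hab with h | h
    · rw [hfloor0] at h; omega
    · rw [hceil1] at h; omega
  -- the set of ordered pairs of disjoint columns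
  set Z := (univ : Finset (Fin ((k+4) * (k+4-1) - 1))).offDiag.filter
      (fun p => (colSet T p.1 ∩ colSet T p.2).card = 0) with hZdef
  have hZcard : Z.card = 2 := by
    have hterm : ∀ p ∈ (univ : Finset (Fin ((k+4) * (k+4-1) - 1))).offDiag,
        (colSet T p.1 ∩ colSet T p.2).card
          + (if (colSet T p.1 ∩ colSet T p.2).card = 0 then 1 else 0) = 1 := by
      intro p hp
      have hne : p.1 ≠ p.2 := (Finset.mem_offDiag.mp hp).2.2
      have := hle1 p.1 p.2 hne
      split_ifs with h <;> omega
    have hsum1 : ∑ p ∈ (univ : Finset (Fin ((k+4) * (k+4-1) - 1))).offDiag,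
        ((colSet T p.1 ∩ colSet T p.2).card
          + (if (colSet T p.1 ∩ colSet T p.2).card = 0 then 1 else 0))
        = (univ : Finset (Fin ((k+4) * (k+4-1) - 1))).offDiag.card := by
      rw [Finset.sum_congr rfl hterm]
      simp
    rw [Finset.sum_add_distrib] at hsum1
    have hzz : ∑ p ∈ (univ : Finset (Fin ((k+4) * (k+4-1) - 1))).offDiag,
        (if (colSet T p.1 ∩ colSet T p.2).card = 0 then 1 else 0) = Z.card := by
      rw [hZdef, Finset.card_filter]
    have hodc : (univ : Finset (Fin ((k+4) * (k+4-1) - 1))).offDiag.card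
        = (k*k+7*k+11) * (k*k+7*k+10) := by
      rw [Finset.offDiag_card, Finset.card_univ, Fintype.card_fin]
      exact Nat.sub_eq_of_eq_add (by rw [NTA.cnat]; ring)
    rw [hzz, ← hSoddef, hodc] at hsum1
    have hq : (2*k+8)*(k*k+5*k+6) + (k*k+5*k+5)*(k*k+7*k+12) + 2
        = (k*k+7*k+11) * (k*k+7*k+10) := by ring
    omega
  -- z j = number of columns disjoint from column j
  set z : Fin ((k+4) * (k+4-1) - 1) → ℕ := fun j =>
    (univ.filter fun j' => j ≠ j' ∧ (colSet T j ∩ colSet T j').card = 0).card with hzdef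
  have hzsum : ∑ j, z j = 2 := by
    rw [← hZcard,
      Finset.card_eq_sum_card_fiberwise (f := Prod.fst) (t := univ) (fun p _ => Finset.mem_univ _)]
    refine Finset.sum_congr rfl fun j _ => ?_
    refine (Finset.card_bij (fun p _ => p.2) ?_ ?_ ?_).symm
    · intro p hp
      rw [Finset.mem_filter] at hp
      obtain ⟨hpZ, hp1⟩ := hp
      rw [hZdef, Finset.mem_filter, Finset.mem_offDiag] at hpZ
      subst hp1
      exact Finset.mem_filter.mpr ⟨Finset.mem_univ _, hpZ.1.2.2, hpZ.2⟩
    · intro p hp q hq hpq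
      rw [Finset.mem_filter] at hp hq
      exact Prod.ext (hp.2.trans hq.2.symm) hpq
    · intro b hb
      rw [Finset.mem_filter] at hb
      refine ⟨(j, b), Finset.mem_filter.mpr ⟨?_, rfl⟩, rfl⟩
      rw [hZdef, Finset.mem_filter, Finset.mem_offDiag]
      exact ⟨⟨Finset.mem_univ _, Finset.mem_univ _, hb.2.1⟩, hb.2.2⟩
  have hz1 : ∀ j, z j ≤ 1 := by
    intro j
    by_contra hcon
    have h2 : 0 < z j := by omega
    simp only [hzdef] at h2
    obtain ⟨a, ha⟩ := Finset.card_pos.mp h2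
    rw [Finset.mem_filter] at ha
    obtain ⟨-, hja, hca⟩ := ha
    have hza : 1 ≤ z a := by
      simp only [hzdef]
      refine Finset.card_pos.mpr ⟨j, Finset.mem_filter.mpr ⟨Finset.mem_univ _, Ne.symm hja, ?_⟩⟩
      rw [Finset.inter_comm]; exact hca
    have hsumge : z j + z a ≤ ∑ j', z j' := by
      have h6 := Finset.sum_le_sum_of_subset (f := z) (Finset.subset_univ ({j, a} : Finset _))
      rwa [Finset.sum_pair hja] at h6
    omega
  -- column cardinalities
  have hcolcard : ∀ j, (colSet T j).card = k+4 := fun j => NTA.colSet_card T hBc j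
  -- the number of deficient symbols in each column
  have hd : ∀ j, (colSet T j ∩ D).card = z j + 2 := by
    intro j
    have hA1 : ∑ s ∈ colSet T j, m s
        = ∑ j' : Fin ((k+4) * (k+4-1) - 1), (colSet T j ∩ colSet T j').card := by
      simp only [hmdef]
      rw [NTA.sum_card_swap (colSet T j) univ (fun s j' => s ∈ colSet T j')]
      refine Finset.sum_congr rfl fun j' _ => ?_
      congr 1
    have hA2 : ∑ s ∈ colSet T j, m s + (colSet T j ∩ D).card = (k+4)*(k+4) := by
      have hterm : ∀ s ∈ colSet T j, m s + (if s ∈ D then 1 else 0) = k+4 := by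
        intro s _
        rcases hrep s with h | h
        · have hsD : s ∈ D := by rw [hDdef, Finset.mem_filter]; exact ⟨Finset.mem_univ _, h⟩
          rw [h, if_pos hsD]
        · have hsD : s ∉ D := by
            rw [hDdef, Finset.mem_filter]
            rintro ⟨-, h3⟩
            omega
          rw [h, if_neg hsD]
      have hs2 := Finset.sum_congr rfl hterm
      rw [Finset.sum_add_distrib, Finset.sum_const, hcolcard j, smul_eq_mul] at hs2
      have hiteD : ∑ s ∈ colSet T j, (if s ∈ D then 1 else 0) = (colSet T j ∩ D).card := by
        rw [← Finset.card_filter]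
        congr 1
      rw [hiteD] at hs2
      omega
    have hB : ∑ j' : Fin ((k+4) * (k+4-1) - 1), (colSet T j ∩ colSet T j').card
        = (k+4) + ∑ j' ∈ univ.erase j, (colSet T j ∩ colSet T j').card := by
      rw [← Finset.add_sum_erase univ _ (Finset.mem_univ j), Finset.inter_self, hcolcard j]
    have hC : ∑ j' ∈ univ.erase j, (colSet T j ∩ colSet T j').card + z j = k*k+7*k+10 := by
      have hterm : ∀ j' ∈ univ.erase j,
          (colSet T j ∩ colSet T j').card
            + (if (colSet T j ∩ colSet T j').card = 0 then 1 else 0) = 1 := by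
        intro j' hj'
        have hne : j ≠ j' := (Finset.ne_of_mem_erase hj').symm
        have := hle1 j j' hne
        split_ifs <;> omega
      have hs3 := Finset.sum_congr rfl hterm
      rw [Finset.sum_add_distrib, Finset.sum_const, smul_eq_mul, mul_one] at hs3
      have hzj : ∑ j' ∈ univ.erase j,
          (if (colSet T j ∩ colSet T j').card = 0 then 1 else 0) = z j := by
        rw [← Finset.card_filter]
        simp only [hzdef]
        congr 1
        ext j'
        simp only [Finset.mem_filter, Finset.mem_erase, Finset.mem_univ, and_true, true_and]
        constructor
        · rintro ⟨h1, h2⟩; exact ⟨Ne.symm h1, h2⟩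
        · rintro ⟨h1, h2⟩; exact ⟨Ne.symm h1, h2⟩
      have hec : (univ.erase j).card = k*k+7*k+10 := by
        rw [Finset.card_erase_of_mem (Finset.mem_univ j), Finset.card_univ, Fintype.card_fin]
        have := NTA.cnat k
        omega
      rw [hzj, hec] at hs3
      exact hs3
    have hA' : ∑ s ∈ colSet T j, m s = (k+4) + ∑ j' ∈ univ.erase j, (colSet T j ∩ colSet T j').card :=
      hA1.trans hB
    have hq : (k+4)*(k+4) = k*k+8*k+16 := by ring
    omega
  -- cov s t = number of columns containing both s and t
  set cov : Fin ((k+4) * (k+4-1) + 1) → Fin ((k+4) * (k+4-1) + 1) → ℕ := fun s t =>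
    (univ.filter fun j => s ∈ colSet T j ∧ t ∈ colSet T j).card with hcovdef
  have hcovsym : ∀ s t, cov s t = cov t s := by
    intro s t
    simp only [hcovdef]
    congr 1
    ext j
    simp only [Finset.mem_filter]
    tauto
  have hcovle : ∀ s t, s ≠ t → cov s t ≤ 1 := by
    intro s t hst
    simp only [hcovdef]
    refine Finset.card_le_one.mpr ?_
    intro a ha b hb
    rw [Finset.mem_filter] at ha hb
    by_contra hab
    have h2 : ({s, t} : Finset (Fin ((k+4) * (k+4-1) + 1))) ⊆ colSet T a ∩ colSet T b := by
      intro x hx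
      rw [Finset.mem_insert, Finset.mem_singleton] at hx
      rcases hx with rfl | rfl
      · exact Finset.mem_inter.mpr ⟨ha.2.1, hb.2.1⟩
      · exact Finset.mem_inter.mpr ⟨ha.2.2, hb.2.2⟩
    have h3 := Finset.card_le_card h2
    rw [Finset.card_pair hst] at h3
    have := hle1 a b hab
    omega
  -- counting covered ordered pairs of deficient symbols, via columns
  have hNA : ∑ p ∈ D.offDiag, cov p.1 p.2 = 2*(k*k) + 14*k + 30 := by
    have h1 : ∑ p ∈ D.offDiag, cov p.1 p.2
        = ∑ j : Fin ((k+4) * (k+4-1) - 1),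
          (D.offDiag.filter fun p => p.1 ∈ colSet T j ∧ p.2 ∈ colSet T j).card := by
      simp only [hcovdef]
      exact NTA.sum_card_swap D.offDiag univ (fun p j => p.1 ∈ colSet T j ∧ p.2 ∈ colSet T j)
    have h2 : ∀ j : Fin ((k+4) * (k+4-1) - 1),
        (D.offDiag.filter fun p => p.1 ∈ colSet T j ∧ p.2 ∈ colSet T j)
        = (colSet T j ∩ D).offDiag := by
      intro j
      ext p
      simp only [Finset.mem_filter, Finset.mem_offDiag, Finset.mem_inter]
      tauto
    have h3 : ∀ j, ((colSet T j ∩ D).offDiag).card = 4 * z j + 2 := by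
      intro j
      rw [Finset.offDiag_card, hd j]
      rcases Nat.le_one_iff_eq_zero_or_eq_one.mp (hz1 j) with h | h <;> rw [h] <;> norm_num
    rw [h1, Finset.sum_congr rfl (fun j _ => by rw [h2 j, h3 j]), Finset.sum_add_distrib,
      ← Finset.mul_sum, hzsum, Finset.sum_const, Finset.card_univ, Fintype.card_fin, smul_eq_mul]
    have := NTA.cnat k
    omega
  -- total covered ordered pairs, via columns
  have hcovall : ∑ p ∈ (univ : Finset (Fin ((k+4) * (k+4-1) + 1))).offDiag, cov p.1 p.2
      = (k*k+7*k+11) * (k*k+7*k+12) := by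
    have h1 : ∑ p ∈ (univ : Finset (Fin ((k+4) * (k+4-1) + 1))).offDiag, cov p.1 p.2
        = ∑ j : Fin ((k+4) * (k+4-1) - 1),
          ((univ : Finset (Fin ((k+4) * (k+4-1) + 1))).offDiag.filter
            fun p => p.1 ∈ colSet T j ∧ p.2 ∈ colSet T j).card := by
      simp only [hcovdef]
      exact NTA.sum_card_swap ((univ : Finset (Fin ((k+4) * (k+4-1) + 1))).offDiag) univ
        (fun p j => p.1 ∈ colSet T j ∧ p.2 ∈ colSet T j)
    have h2 : ∀ j : Fin ((k+4) * (k+4-1) - 1),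
        ((univ : Finset (Fin ((k+4) * (k+4-1) + 1))).offDiag.filter
          fun p => p.1 ∈ colSet T j ∧ p.2 ∈ colSet T j) = (colSet T j).offDiag := by
      intro j
      ext p
      simp only [Finset.mem_filter, Finset.mem_offDiag, Finset.mem_univ, true_and]
      tauto
    have h3 : ∀ j : Fin ((k+4) * (k+4-1) - 1), ((colSet T j).offDiag).card = k*k+7*k+12 := by
      intro j
      rw [Finset.offDiag_card, hcolcard j]
      exact Nat.sub_eq_of_eq_add (by ring)
    rw [h1, Finset.sum_congr rfl (fun j _ => by rw [h2 j, h3 j]), Finset.sum_const,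
      Finset.card_univ, Fintype.card_fin, smul_eq_mul, NTA.cnat]
  -- pairs containing a non-deficient symbol are covered exactly once
  have hfull : ∀ s t, s ≠ t → s ∉ D → cov s t = 1 := by
    intro s t hst hsD
    have hms : m s = k+4 := by
      rcases hrep s with h | h
      · exact absurd (by rw [hDdef, Finset.mem_filter]; exact ⟨Finset.mem_univ _, h⟩ :
          s ∈ D) hsD
      · exact h
    have hw : ∑ t' ∈ univ.erase s, cov s t'
        = (univ.filter fun j => s ∈ colSet T j).card * (k+3) := by
      simp only [hcovdef]
      rw [NTA.sum_card_swap (univ.erase s) univ (fun t' j => s ∈ colSet T j ∧ t' ∈ colSet T j)]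
      have h5 : ∀ j, ((univ.erase s).filter fun t' => s ∈ colSet T j ∧ t' ∈ colSet T j).card
          = if s ∈ colSet T j then k+3 else 0 := by
        intro j
        split_ifs with h
        · have he : ((univ.erase s).filter fun t' => s ∈ colSet T j ∧ t' ∈ colSet T j)
              = (colSet T j).erase s := by
            ext t'
            simp only [Finset.mem_filter, Finset.mem_erase, Finset.mem_univ, and_true, true_and]
            tauto
          rw [he, Finset.card_erase_of_mem h, hcolcard j]
          omega
        · have he : ((univ.erase s).filter fun t' => s ∈ colSet T j ∧ t' ∈ colSet T j) = ∅ := by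
            rw [Finset.filter_eq_empty_iff]
            rintro t' - ⟨h1, -⟩
            exact h h1
          rw [he, Finset.card_empty]
      rw [Finset.sum_congr rfl (fun j _ => h5 j), Finset.sum_ite, Finset.sum_const,
        Finset.sum_const_zero, add_zero, smul_eq_mul]
    have hwv : ∑ t' ∈ univ.erase s, cov s t' = (univ.erase s).card := by
      rw [hw]
      have hms' : (univ.filter fun j => s ∈ colSet T j).card = k+4 := by
        rw [hmdef] at hms
        exact hms
      rw [hms', Finset.card_erase_of_mem (Finset.mem_univ s), Finset.card_univ, Fintype.card_fin]
      have := NTA.vnat k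
      have hq : (k+4)*(k+3) = k*k+7*k+12 := by ring
      omega
    have hone : ∀ t' ∈ univ.erase s, cov s t' = 1 := by
      intro t' ht'
      by_contra hne1
      have hlt : ∑ t'' ∈ univ.erase s, cov s t'' < ∑ _t'' ∈ univ.erase s, 1 :=
        Finset.sum_lt_sum (fun i hi => hcovle s i (Finset.ne_of_mem_erase hi).symm)
          ⟨t', ht', by have := hcovle s t' (Finset.ne_of_mem_erase ht').symm; omega⟩
      rw [Finset.sum_const, smul_eq_mul, mul_one] at hlt
      omega
    exact hone t (Finset.mem_erase.mpr ⟨hst.symm, Finset.mem_univ t⟩)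
  -- the final count
  have hsub : D.offDiag ⊆ (univ : Finset (Fin ((k+4) * (k+4-1) + 1))).offDiag := by
    intro p hp
    rw [Finset.mem_offDiag] at hp ⊢
    exact ⟨Finset.mem_univ _, Finset.mem_univ _, hp.2.2⟩
  have hsd : ∑ p ∈ (univ : Finset (Fin ((k+4) * (k+4-1) + 1))).offDiag \ D.offDiag, cov p.1 p.2
      = ((univ : Finset (Fin ((k+4) * (k+4-1) + 1))).offDiag \ D.offDiag).card := by
    have hone : ∀ p ∈ (univ : Finset (Fin ((k+4) * (k+4-1) + 1))).offDiag \ D.offDiag,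
        cov p.1 p.2 = 1 := by
      intro p hp
      rw [Finset.mem_sdiff] at hp
      obtain ⟨hpu, hpd⟩ := hp
      have hne : p.1 ≠ p.2 := (Finset.mem_offDiag.mp hpu).2.2
      have hor : p.1 ∉ D ∨ p.2 ∉ D := by
        by_contra hcon
        push_neg at hcon
        exact hpd (Finset.mem_offDiag.mpr ⟨hcon.1, hcon.2, hne⟩)
      rcases hor with h | h
      · exact hfull p.1 p.2 hne h
      · rw [hcovsym]; exact hfull p.2 p.1 hne.symm h
    rw [Finset.sum_congr rfl hone, Finset.sum_const, smul_eq_mul, mul_one]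
  have hsplit := Finset.sum_sdiff (f := fun p => cov p.1 p.2) hsub
  have hcards := Finset.card_sdiff_add_card_eq_card hsub
  have hDod : D.offDiag.card = 4*(k*k)+30*k+56 := by
    rw [Finset.offDiag_card, hDcard]
    exact Nat.sub_eq_of_eq_add (by ring)
  have hUod : (univ : Finset (Fin ((k+4) * (k+4-1) + 1))).offDiag.card
      = (k*k+7*k+13)*(k*k+7*k+12) := by
    rw [Finset.offDiag_card, Finset.card_univ, Fintype.card_fin]
    exact Nat.sub_eq_of_eq_add (by rw [NTA.vnat]; ring)
  rw [hsd, hNA, hcovall] at hsplit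
  have hq1 : (k*k+7*k+13)*(k*k+7*k+12) = (k*k+7*k+11)*(k*k+7*k+12) + (2*(k*k)+14*k+24) := by
    ring
  omega
end

section
/- Let 2 ≤ r and 2 ≤ c. Then: (a) every (r × c, v)-triple array with v > max(r, c) satisfies v ≥ r + c − 1; (b) every (r × c, v)-balanced grid satisfies v ≤ r + c − 1; (c) every (r × c, r + c − 1)-triple array is an (r × c, r + c − 1)-balanced grid, and every (r × c, r + c − 1)-balanced grid is an (r × c, r + c − 1)-triple array. -/
open Finset

/-- An `(r × c, v)`-triple array: binary, equireplicate, with constant row-column,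
row-row and column-column intersection sizes. -/
def IsTripleArray {r c v : ℕ} (T : Fin r × Fin c → Fin v) : Prop :=
  IsBinaryDesign T ∧ IsEquireplicate T ∧
  (∃ l : ℕ, ∀ (i : Fin r) (j : Fin c), (rowSet T i ∩ colSet T j).card = l) ∧
  (∃ l : ℕ, ∀ i j : Fin r, i ≠ j → (rowSet T i ∩ rowSet T j).card = l) ∧
  (∃ l : ℕ, ∀ i j : Fin c, i ≠ j → (colSet T i ∩ colSet T j).card = l)

/-- An `(r × c, v)`-balanced grid: binary, `μ` an integer, and every pair of
distinct symbols is covered by exactly `μ` rows and columns in total. -/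
def IsBalancedGrid {r c v : ℕ} (T : Fin r × Fin c → Fin v) : Prop :=
  IsBinaryDesign T ∧ (muGrid r c v).den = 1 ∧
  ∀ a b : Fin v, a ≠ b →
    ((rowPairCount T a b + colPairCount T a b : ℚ) = muGrid r c v)

/-!
Let `X` be the `v × (r + c)` incidence matrix of symbols against the rows and columns of `T`.
In a binary design every symbol meets as many rows as columns, so `X` kills the sign vector
`(1, …, 1, -1, …, -1)` and `rank X ≤ r + c - 1`. The Gram matrix `XᵀX` records the intersection
sizes of rows and columns, and `XXᵀ` the numbers of lines through pairs of symbols.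

For a triple array with `v > max r c`, the shape of `XᵀX` forces `ker X` to be spanned by the sign
vector, so `r + c - 1 = rank X ≤ v`. For a balanced grid, `XXᵀ = (2e - μ) I + μ J`, which is
invertible once `v ≥ r + c`, and then `v = rank X ≤ r + c - 1`. When `v = r + c - 1` both kinds of
design have `rank X = v` with kernel spanned by the sign vector; for such `X`, the identities
`X (XᵀX) = (XXᵀ) X` and `X P = (e I + e J) X`, where `P` is the Gram matrix of a triple array with
parameters `e`, `c - e`, `r - e`, show that `XᵀX = P` if and only if `XXᵀ = e I + e J`.
-/

namespace Matrix

variable {m n ι α R K : Type*}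

def diagOffDiag [DecidableEq n] (d e : R) : Matrix n n R :=
  of fun i j => if i = j then d else e

theorem diagOffDiag_mulVec [Fintype n] [DecidableEq n] [Ring R] (d e : R) (x : n → R) :
    diagOffDiag d e *ᵥ x = fun i => (d - e) * x i + e * ∑ j, x j := by
  ext i
  have hsplit (j : n) :
      (if i = j then d else e) * x j = e * x j + if i = j then (d - e) * x j else 0 := by
    split_ifs <;> simp [sub_mul]
  simp only [mulVec, dotProduct, diagOffDiag, of_apply, hsplit, sum_add_distrib, ← mul_sum,
    sum_ite_eq, mem_univ, if_true]
  abel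

theorem isUnit_diagOffDiag [Fintype n] [DecidableEq n] [Field K] [LinearOrder K]
    [IsStrictOrderedRing K] {d e : K} (he : 0 ≤ e) (hed : e < d) :
    IsUnit (diagOffDiag d e : Matrix n n K) := by
  rw [← mulVec_injective_iff_isUnit, ← coe_mulVecLin, injective_iff_map_eq_zero]
  intro x hx
  rw [mulVecLin_apply, diagOffDiag_mulVec] at hx
  have hcoord : ∀ i, (d - e) * x i + e * ∑ j, x j = 0 := fun i => congrFun hx i
  have hsum : ((d - e) + Fintype.card n * e) * ∑ j, x j = 0 := by
    have := Finset.sum_eq_zero (s := univ) fun i _ => hcoord i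
    rw [sum_add_distrib, ← mul_sum, sum_const, card_univ, nsmul_eq_mul] at this
    linear_combination this
  have hpos : 0 < (d - e) + Fintype.card n * e := by positivity
  have hsum0 : ∑ j, x j = 0 := (mul_eq_zero.1 hsum).resolve_left hpos.ne'
  ext i
  have := hcoord i
  rw [hsum0, mul_zero, add_zero] at this
  exact (mul_eq_zero.1 this).resolve_left (sub_ne_zero.2 hed.ne')

theorem rank_lt_card_of_mulVec_eq_zero [Fintype n] [Field K] {A : Matrix m n K} {w : n → K}
    (hw : w ≠ 0) (hAw : A *ᵥ w = 0) : A.rank < Fintype.card n := by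
  have hspan : K ∙ w ≤ LinearMap.ker A.mulVecLin := by
    rw [Submodule.span_singleton_le_iff_mem, LinearMap.mem_ker, mulVecLin_apply, hAw]
  have hnullity := LinearMap.finrank_range_add_finrank_ker A.mulVecLin
  have hker := Submodule.finrank_mono hspan
  rw [Module.finrank_fintype_fun_eq_card] at hnullity
  rw [finrank_span_singleton hw] at hker
  rw [rank]
  omega

theorem ker_mulVecLin_le_span_singleton_iff [Fintype n] [Field K] {A : Matrix m n K}
    {w : n → K} (hw : w ≠ 0) (hAw : A *ᵥ w = 0) :
    LinearMap.ker A.mulVecLin ≤ K ∙ w ↔ A.rank + 1 = Fintype.card n := by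
  have hspan : K ∙ w ≤ LinearMap.ker A.mulVecLin := by
    rw [Submodule.span_singleton_le_iff_mem, LinearMap.mem_ker, mulVecLin_apply, hAw]
  have hnullity := LinearMap.finrank_range_add_finrank_ker A.mulVecLin
  rw [Module.finrank_fintype_fun_eq_card] at hnullity
  rw [rank, ← hnullity, add_right_inj, ← finrank_span_singleton (K := K) hw]
  constructor
  · intro hker
    rw [le_antisymm hker hspan]
  · intro hdim
    exact (Submodule.eq_of_le_of_finrank_le hspan hdim.ge).ge

theorem exists_mul_eq_one_of_rank_eq_card [Fintype m] [DecidableEq m] [Fintype n] [Field K]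
    {A : Matrix m n K} (h : A.rank = Fintype.card m) : ∃ B : Matrix n m K, A * B = 1 := by
  refine mulVec_surjective_iff_exists_right_inverse.1 ?_
  rw [← coe_mulVecLin, ← LinearMap.range_eq_top]
  exact Submodule.eq_top_of_finrank_eq (by rw [← rank, h, Module.finrank_fintype_fun_eq_card])

theorem eq_zero_of_mul_eq_zero_of_vecMul_eq_zero [Fintype n] [Fintype ι] [Field K]
    {A : Matrix m n K} {D : Matrix n ι K} {w : n → K}
    (hker : LinearMap.ker A.mulVecLin ≤ K ∙ w) (hw : w ⬝ᵥ w ≠ 0)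
    (hAD : A * D = 0) (hwD : w ᵥ* D = 0) : D = 0 := by
  rw [ext_iff_mulVec]
  intro y
  have hmem : D *ᵥ y ∈ LinearMap.ker A.mulVecLin := by
    rw [LinearMap.mem_ker, mulVecLin_apply, mulVec_mulVec, hAD, zero_mulVec]
  obtain ⟨t, ht⟩ := Submodule.mem_span_singleton.1 (hker hmem)
  have ht0 : t * (w ⬝ᵥ w) = 0 := by
    rw [← smul_eq_mul, ← dotProduct_smul, ht, dotProduct_mulVec, hwD, zero_dotProduct]
  rw [← ht, (mul_eq_zero.1 ht0).resolve_right hw, zero_smul, zero_mulVec]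

variable [DecidableEq α]

def incMatrix (R : Type*) [Zero R] [One R] (S : ι → Finset α) : Matrix α ι R :=
  of fun a p => if a ∈ S p then 1 else 0

variable [Semiring R] (S : ι → Finset α)

theorem transpose_mul_incMatrix_apply [Fintype α] (p q : ι) :
    ((incMatrix R S)ᵀ * incMatrix R S) p q = #(S p ∩ S q) := by
  simp [incMatrix, mul_apply, inter_comm]

theorem one_vecMul_incMatrix [Fintype α] :
    1 ᵥ* incMatrix R S = fun p => (#(S p) : R) := by
  ext p
  simp [incMatrix, vecMul, dotProduct]

end Matrix

open Matrix

section

variable {r c v : ℕ} {T : Fin r × Fin c → Fin v}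

theorem avgRepl_mul_card (hv : v ≠ 0) : avgRepl r c v * v = r * c := by
  unfold avgRepl
  field_simp

theorem avgRepl_mul_of_card_eq (hv : v + 1 = r + c) : avgRepl r c v * (r + c - 1) = r * c := by
  rcases Nat.eq_zero_or_pos v with rfl | hv0
  · obtain rfl | rfl : r = 0 ∨ c = 0 := by omega
    all_goals simp [avgRepl]
  have hv' : (r : ℚ) + c - 1 = v := by
    have : (v : ℚ) + 1 = r + c := by exact_mod_cast hv
    linarith
  rw [hv', avgRepl_mul_card hv0.ne']

theorem avgRepl_pos (hr : 0 < r) (hc : 0 < c) (hv : 0 < v) : 0 < avgRepl r c v :=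
  div_pos (mul_pos (by exact_mod_cast hr) (by exact_mod_cast hc)) (by exact_mod_cast hv)

theorem muGrid_mul (hv : 2 ≤ v) : muGrid r c v * (v - 1) = avgRepl r c v * (r + c - 2) := by
  have : (v : ℚ) - 1 ≠ 0 := by
    have : (2 : ℚ) ≤ v := by exact_mod_cast hv
    linarith
  rw [muGrid, div_mul_cancel₀ _ this]

theorem muGrid_eq_avgRepl (hv : v + 1 = r + c) (hrc : 2 < r + c) :
    muGrid r c v = avgRepl r c v := by
  have hv' : (v : ℚ) - 1 = r + c - 2 := by
    have : (v : ℚ) + 1 = r + c := by exact_mod_cast hv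
    linarith
  have hrc' : (r : ℚ) + c - 2 ≠ 0 := by
    have : (2 : ℚ) < r + c := by exact_mod_cast hrc
    linarith
  rw [muGrid, hv', mul_div_assoc, div_self hrc', mul_one]

def incidence (T : Fin r × Fin c → Fin v) : Matrix (Fin v) (Fin r ⊕ Fin c) ℚ :=
  incMatrix ℚ (Sum.elim (rowSet T) (colSet T))

@[simp]
theorem incidence_apply_inl (a : Fin v) (i : Fin r) :
    incidence T a (.inl i) = if a ∈ rowSet T i then 1 else 0 :=
  rfl

@[simp]
theorem incidence_apply_inr (a : Fin v) (j : Fin c) :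
    incidence T a (.inr j) = if a ∈ colSet T j then 1 else 0 :=
  rfl

def signVec (r c : ℕ) : Fin r ⊕ Fin c → ℚ := Sum.elim 1 (-1)

theorem signVec_ne_zero (hr : 0 < r) : signVec r c ≠ 0 := fun h => by
  simpa [signVec] using congrFun h (Sum.inl ⟨0, hr⟩)

theorem signVec_dotProduct_self : signVec r c ⬝ᵥ signVec r c = r + c := by
  simp [signVec, dotProduct, Fintype.sum_sum_type]

namespace IsBinaryDesign

theorem card_rowSet (hb : IsBinaryDesign T) (i : Fin r) : #(rowSet T i) = c := by
  rw [rowSet, card_image_of_injective _ fun j j' => not_imp_not.1 (hb.1 i j j'), card_univ,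
    Fintype.card_fin]

theorem card_colSet (hb : IsBinaryDesign T) (j : Fin c) : #(colSet T j) = r := by
  rw [colSet, card_image_of_injective _ fun i i' => not_imp_not.1 (hb.2 j i i'), card_univ,
    Fintype.card_fin]

theorem card_rows_mem (hb : IsBinaryDesign T) (a : Fin v) :
    #{i | a ∈ rowSet T i} = replNum T a := by
  refine (card_bij (fun p _ => p.1) (fun p hp => ?_) (fun p hp q hq hpq => ?_) fun i hi => ?_).symm
  · simp only [mem_filter, mem_univ, true_and] at hp ⊢
    exact mem_image.2 ⟨p.2, mem_univ _, hp⟩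
  · simp only [mem_filter, mem_univ, true_and] at hp hq
    refine Prod.ext hpq (not_imp_not.1 (hb.1 p.1 p.2 q.2) ?_)
    rw [hp, hpq, hq]
  · obtain ⟨j, -, hj⟩ := mem_image.1 (mem_filter.1 hi).2
    exact ⟨(i, j), by simpa [replNum] using hj, rfl⟩

theorem card_cols_mem (hb : IsBinaryDesign T) (a : Fin v) :
    #{j | a ∈ colSet T j} = replNum T a := by
  refine (card_bij (fun p _ => p.2) (fun p hp => ?_) (fun p hp q hq hpq => ?_) fun j hj => ?_).symm
  · simp only [mem_filter, mem_univ, true_and] at hp ⊢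
    exact mem_image.2 ⟨p.1, mem_univ _, hp⟩
  · simp only [mem_filter, mem_univ, true_and] at hp hq
    refine Prod.ext (not_imp_not.1 (hb.2 p.2 p.1 q.1) ?_) hpq
    rw [hp, hpq, hq]
  · obtain ⟨i, -, hi⟩ := mem_image.1 (mem_filter.1 hj).2
    exact ⟨(i, j), by simpa [replNum] using hi, rfl⟩

theorem incidence_mulVec_elim_one_zero (hb : IsBinaryDesign T) :
    incidence T *ᵥ (Sum.elim 1 0 : Fin r ⊕ Fin c → ℚ) = fun a => (replNum T a : ℚ) := by
  ext a
  simp [mulVec, dotProduct, Fintype.sum_sum_type, ← hb.card_rows_mem a]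

theorem incidence_mulVec_elim_zero_one (hb : IsBinaryDesign T) :
    incidence T *ᵥ (Sum.elim 0 1 : Fin r ⊕ Fin c → ℚ) = fun a => (replNum T a : ℚ) := by
  ext a
  simp [mulVec, dotProduct, Fintype.sum_sum_type, ← hb.card_cols_mem a]

theorem incidence_mulVec_signVec (hb : IsBinaryDesign T) : incidence T *ᵥ signVec r c = 0 := by
  have : signVec r c = (Sum.elim 1 0 : Fin r ⊕ Fin c → ℚ) - (Sum.elim 0 1 : Fin r ⊕ Fin c → ℚ) := by
    ext (i | j) <;> simp [signVec]
  rw [this, mulVec_sub, hb.incidence_mulVec_elim_one_zero, hb.incidence_mulVec_elim_zero_one,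
    sub_self]

theorem one_vecMul_incidence (hb : IsBinaryDesign T) :
    1 ᵥ* incidence T = Sum.elim (fun _ => (c : ℚ)) (fun _ => (r : ℚ)) := by
  rw [incidence, one_vecMul_incMatrix]
  ext (i | j) <;> simp [hb.card_rowSet, hb.card_colSet]

theorem sum_incidence_mulVec (hb : IsBinaryDesign T) (y : Fin r ⊕ Fin c → ℚ) :
    ∑ a, (incidence T *ᵥ y) a = c * ∑ i, y (.inl i) + r * ∑ j, y (.inr j) := by
  rw [← one_dotProduct, dotProduct_mulVec, hb.one_vecMul_incidence]
  simp [dotProduct, Fintype.sum_sum_type, mul_sum]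

theorem rowPairCount_self (hb : IsBinaryDesign T) (a : Fin v) :
    rowPairCount T a a = replNum T a := by
  simpa [rowPairCount] using hb.card_rows_mem a

theorem colPairCount_self (hb : IsBinaryDesign T) (a : Fin v) :
    colPairCount T a a = replNum T a := by
  simpa [colPairCount] using hb.card_cols_mem a

theorem sum_mul_transpose_apply (hb : IsBinaryDesign T) (a : Fin v) :
    ∑ b, (incidence T * (incidence T)ᵀ) a b = (r + c) * replNum T a := by
  have hq : Sum.elim (fun _ => (c : ℚ)) (fun _ => (r : ℚ)) =
      (c : ℚ) • (Sum.elim 1 0 : Fin r ⊕ Fin c → ℚ) +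
        (r : ℚ) • (Sum.elim 0 1 : Fin r ⊕ Fin c → ℚ) := by
    ext (i | j) <;> simp
  calc ∑ b, (incidence T * (incidence T)ᵀ) a b = ((incidence T * (incidence T)ᵀ) *ᵥ 1) a := by
        simp [mulVec, dotProduct]
    _ = _ := by
        rw [← mulVec_mulVec, mulVec_transpose, hb.one_vecMul_incidence, hq, mulVec_add, mulVec_smul,
          mulVec_smul, hb.incidence_mulVec_elim_one_zero, hb.incidence_mulVec_elim_zero_one]
        simp only [Pi.add_apply, Pi.smul_apply, smul_eq_mul]
        ring

end IsBinaryDesign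

theorem transpose_mul_incidence_apply (p q : Fin r ⊕ Fin c) :
    ((incidence T)ᵀ * incidence T) p q =
      #(Sum.elim (rowSet T) (colSet T) p ∩ Sum.elim (rowSet T) (colSet T) q) :=
  transpose_mul_incMatrix_apply _ _ _

theorem incidence_mul_transpose_apply (a b : Fin v) :
    (incidence T * (incidence T)ᵀ) a b = rowPairCount T a b + colPairCount T a b := by
  simp [mul_apply, Fintype.sum_sum_type, rowPairCount, colPairCount, ← ite_and, sum_boole, and_comm]

/-- The Gram matrix `XᵀX` of a triple array whose row–column, row–row and column–column
intersections have sizes `l₁`, `l₂`, `l₃`. -/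
def tripleGram (r c : ℕ) (l₁ l₂ l₃ : ℚ) : Matrix (Fin r ⊕ Fin c) (Fin r ⊕ Fin c) ℚ :=
  fromBlocks (diagOffDiag (c : ℚ) l₂) (of fun _ _ => l₁) (of fun _ _ => l₁) (diagOffDiag (r : ℚ) l₃)

theorem tripleGram_transpose (l₁ l₂ l₃ : ℚ) :
    (tripleGram r c l₁ l₂ l₃)ᵀ = tripleGram r c l₁ l₂ l₃ := by
  ext (i | j) (i' | j') <;> simp [tripleGram, diagOffDiag, eq_comm]

theorem tripleGram_mulVec (l₁ l₂ l₃ : ℚ) (y : Fin r ⊕ Fin c → ℚ) :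
    tripleGram r c l₁ l₂ l₃ *ᵥ y =
      Sum.elim (fun i => (c - l₂) * y (.inl i) + (l₂ * ∑ i, y (.inl i) + l₁ * ∑ j, y (.inr j)))
        (fun j => (r - l₃) * y (.inr j) + (l₁ * ∑ i, y (.inl i) + l₃ * ∑ j, y (.inr j))) := by
  rw [tripleGram, fromBlocks_mulVec, diagOffDiag_mulVec, diagOffDiag_mulVec]
  ext (i | j) <;>
    simp only [mulVec, dotProduct, of_apply, Function.comp_apply, mul_sum, Sum.elim_inl,
      Sum.elim_inr, Pi.add_apply] <;>
    ring

theorem tripleGram_mulVec_signVec {e : ℚ} (he : e * (r + c - 1) = r * c) :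
    tripleGram r c e (c - e) (r - e) *ᵥ signVec r c = 0 := by
  rw [tripleGram_mulVec]
  ext (i | j) <;>
    simp only [signVec, Sum.elim_inl, Sum.elim_inr, Pi.one_apply, Pi.neg_apply, Pi.zero_apply,
      sub_sub_cancel, mul_one, mul_neg, sum_const, card_univ, Fintype.card_fin,
      nsmul_eq_mul]
  · linear_combination -he
  · linear_combination he

theorem eq_of_tripleGram_mulVec_eq_zero {l₁ l₂ l₃ : ℚ} (hl₂ : (c : ℚ) - l₂ ≠ 0)
    (hl₃ : (r : ℚ) - l₃ ≠ 0) {y : Fin r ⊕ Fin c → ℚ} (hy : tripleGram r c l₁ l₂ l₃ *ᵥ y = 0) :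
    (∀ i i', y (.inl i) = y (.inl i')) ∧ ∀ j j', y (.inr j) = y (.inr j') := by
  rw [tripleGram_mulVec] at hy
  constructor
  · intro i i'
    have h (k : Fin r) := congrFun hy (.inl k)
    simp only [Sum.elim_inl, Pi.zero_apply] at h
    exact mul_left_cancel₀ hl₂ (by linarith [h i, h i'])
  · intro j j'
    have h (k : Fin c) := congrFun hy (.inr k)
    simp only [Sum.elim_inr, Pi.zero_apply] at h
    exact mul_left_cancel₀ hl₃ (by linarith [h j, h j'])

theorem IsTripleArray.exists_gram_eq (hT : IsTripleArray T) :
    ∃ l₁ l₂ l₃ : ℚ, (incidence T)ᵀ * incidence T = tripleGram r c l₁ l₂ l₃ := by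
  obtain ⟨hb, -, ⟨l₁, h₁⟩, ⟨l₂, h₂⟩, ⟨l₃, h₃⟩⟩ := hT
  refine ⟨l₁, l₂, l₃, ?_⟩
  ext (i | j) (i' | j') <;>
    simp only [transpose_mul_incidence_apply, tripleGram, diagOffDiag, fromBlocks_apply₁₁,
      fromBlocks_apply₁₂, fromBlocks_apply₂₁, fromBlocks_apply₂₂, of_apply, Sum.elim_inl,
      Sum.elim_inr]
  · split_ifs with h
    · rw [h, inter_self, hb.card_rowSet]
    · rw [h₂ i i' h]
  · rw [h₁]
  · rw [inter_comm, h₁]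
  · split_ifs with h
    · rw [h, inter_self, hb.card_colSet]
    · rw [h₃ j j' h]

theorem isTripleArray_of_gram_eq (hb : IsBinaryDesign T) (he : IsEquireplicate T) {l₁ l₂ l₃ : ℚ}
    (hG : (incidence T)ᵀ * incidence T = tripleGram r c l₁ l₂ l₃) : IsTripleArray T := by
  have hentry (p q) := (transpose_mul_incidence_apply p q).symm.trans (congrFun (congrFun hG p) q)
  refine ⟨hb, he, ⟨⌊l₁⌋₊, fun i j => ?_⟩, ⟨⌊l₂⌋₊, fun i i' h => ?_⟩, ⟨⌊l₃⌋₊, fun j j' h => ?_⟩⟩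
  · have := hentry (.inl i) (.inr j)
    simp only [tripleGram, fromBlocks_apply₁₂, of_apply, Sum.elim_inl, Sum.elim_inr] at this
    rw [← this, Nat.floor_natCast]
  · have := hentry (.inl i) (.inl i')
    simp only [tripleGram, fromBlocks_apply₁₁, diagOffDiag, of_apply, Sum.elim_inl,
      if_neg h] at this
    rw [← this, Nat.floor_natCast]
  · have := hentry (.inr j) (.inr j')
    simp only [tripleGram, fromBlocks_apply₂₂, diagOffDiag, of_apply, Sum.elim_inr,
      if_neg h] at this
    rw [← this, Nat.floor_natCast]

namespace IsBinaryDesign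

theorem gram_mulVec_elim_one_zero (hb : IsBinaryDesign T) (he : IsEquireplicate T) :
    ((incidence T)ᵀ * incidence T) *ᵥ (Sum.elim 1 0 : Fin r ⊕ Fin c → ℚ) =
      avgRepl r c v • Sum.elim (fun _ => (c : ℚ)) (fun _ => (r : ℚ)) := by
  have hrepl : (fun a => (replNum T a : ℚ)) = avgRepl r c v • 1 := funext fun a => by simp [he.2 a]
  rw [← mulVec_mulVec, hb.incidence_mulVec_elim_one_zero, hrepl, mulVec_smul, mulVec_transpose,
    hb.one_vecMul_incidence]

theorem gram_mulVec_elim_zero_one (hb : IsBinaryDesign T) (he : IsEquireplicate T) :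
    ((incidence T)ᵀ * incidence T) *ᵥ (Sum.elim 0 1 : Fin r ⊕ Fin c → ℚ) =
      avgRepl r c v • Sum.elim (fun _ => (c : ℚ)) (fun _ => (r : ℚ)) := by
  have hrepl : (fun a => (replNum T a : ℚ)) = avgRepl r c v • 1 := funext fun a => by simp [he.2 a]
  rw [← mulVec_mulVec, hb.incidence_mulVec_elim_zero_one, hrepl, mulVec_smul, mulVec_transpose,
    hb.one_vecMul_incidence]

theorem tripleGram_coeffs (hb : IsBinaryDesign T) (he : IsEquireplicate T) (hr : 0 < r)
    (hc : 0 < c) {l₁ l₂ l₃ : ℚ} (hG : (incidence T)ᵀ * incidence T = tripleGram r c l₁ l₂ l₃) :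
    l₁ = avgRepl r c v ∧ (r - 1) * l₂ = c * (avgRepl r c v - 1) ∧
      (c - 1) * l₃ = r * (avgRepl r c v - 1) := by
  have h₁ := congrFun (hb.gram_mulVec_elim_one_zero he) (Sum.inl ⟨0, hr⟩)
  have h₂ := congrFun (hb.gram_mulVec_elim_zero_one he) (Sum.inl ⟨0, hr⟩)
  have h₃ := congrFun (hb.gram_mulVec_elim_zero_one he) (Sum.inr ⟨0, hc⟩)
  rw [hG, tripleGram_mulVec] at h₁ h₂ h₃
  simp only [Sum.elim_inl, Sum.elim_inr, Pi.one_apply, Pi.zero_apply, Pi.smul_apply, smul_eq_mul,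
    mul_one, mul_zero, add_zero, zero_add, sum_const, card_univ, Fintype.card_fin,
    nsmul_eq_mul] at h₁ h₂ h₃
  have hc' : (c : ℚ) ≠ 0 := by positivity
  exact ⟨mul_right_cancel₀ hc' h₂, by linarith, by linarith⟩

theorem signVec_vecMul_gram (hb : IsBinaryDesign T) :
    signVec r c ᵥ* ((incidence T)ᵀ * incidence T) = 0 := by
  rw [← vecMul_vecMul, vecMul_transpose, hb.incidence_mulVec_signVec, zero_vecMul]

end IsBinaryDesign

namespace IsTripleArray

theorem ker_incidence_le (hT : IsTripleArray T) (hr : 2 ≤ r) (hc : 2 ≤ c) (hrv : r < v)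
    (hcv : c < v) : LinearMap.ker (incidence T).mulVecLin ≤ ℚ ∙ signVec r c := by
  obtain ⟨l₁, l₂, l₃, hG⟩ := hT.exists_gram_eq
  obtain ⟨hb, he, -⟩ := hT
  obtain ⟨-, h₂, h₃⟩ := hb.tripleGram_coeffs he (by omega) (by omega) hG
  have he_pos := avgRepl_pos (r := r) (c := c) (v := v) (by omega) (by omega) (by omega)
  have hev : avgRepl r c v * v = r * c := avgRepl_mul_card (by omega)
  have hrv' : (r : ℚ) < v := by exact_mod_cast hrv
  have hcv' : (c : ℚ) < v := by exact_mod_cast hcv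
  have hr' : (2 : ℚ) ≤ r := by exact_mod_cast hr
  have hc' : (2 : ℚ) ≤ c := by exact_mod_cast hc
  -- `(r - 1) (c - l₂) = c (r - e)`, and `e < r` because `c < v`
  have hl₂ : (c : ℚ) - l₂ ≠ 0 := fun h => by nlinarith
  have hl₃ : (r : ℚ) - l₃ ≠ 0 := fun h => by nlinarith
  intro y hy
  rw [LinearMap.mem_ker, mulVecLin_apply] at hy
  obtain ⟨hrow, hcol⟩ := eq_of_tripleGram_mulVec_eq_zero hl₂ hl₃
    (by rw [← hG, ← mulVec_mulVec, hy, mulVec_zero])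
  set α := y (.inl ⟨0, by omega⟩)
  set β := y (.inr ⟨0, by omega⟩)
  have hy' : y = α • signVec r c + (α + β) • (Sum.elim 0 1 : Fin r ⊕ Fin c → ℚ) := by
    ext (i | j)
    · simp [signVec, α, hrow i ⟨0, by omega⟩]
    · simp [signVec, β, hcol j ⟨0, by omega⟩]
  have hαβ : (α + β) * avgRepl r c v = 0 := by
    have := congrFun hy ⟨0, by omega⟩
    rw [hy', mulVec_add, mulVec_smul, mulVec_smul, hb.incidence_mulVec_signVec,
      hb.incidence_mulVec_elim_zero_one] at this
    simpa [he.2] using this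
  refine Submodule.mem_span_singleton.2 ⟨α, ?_⟩
  rw [hy', (mul_eq_zero.1 hαβ).resolve_right he_pos.ne', zero_smul, add_zero]

theorem rank_incidence (hT : IsTripleArray T) (hr : 2 ≤ r) (hc : 2 ≤ c) (hrv : r < v)
    (hcv : c < v) : (incidence T).rank + 1 = r + c := by
  have := (ker_mulVecLin_le_span_singleton_iff (signVec_ne_zero (by omega))
    hT.1.incidence_mulVec_signVec).1 (hT.ker_incidence_le hr hc hrv hcv)
  simpa using this

theorem le_card (hT : IsTripleArray T) (hr : 2 ≤ r) (hc : 2 ≤ c) (hv : max r c < v) :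
    r + c - 1 ≤ v := by
  have hrank := hT.rank_incidence hr hc (lt_of_le_of_lt (le_max_left r c) hv)
    (lt_of_le_of_lt (le_max_right r c) hv)
  have := (incidence T).rank_le_card_height
  rw [Fintype.card_fin] at this
  omega

end IsTripleArray

theorem rank_incidence_of_mul_transpose_eq {d e : ℚ} (he : 0 ≤ e) (hed : e < d)
    (hM : incidence T * (incidence T)ᵀ = diagOffDiag d e) : (incidence T).rank = v := by
  rw [← rank_self_mul_transpose, hM, rank_of_isUnit _ (isUnit_diagOffDiag he hed),
    Fintype.card_fin]

namespace IsBalancedGrid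

theorem isEquireplicate (hg : IsBalancedGrid T) (hr : 2 ≤ r) (hc : 0 < c) : IsEquireplicate T := by
  obtain ⟨hb, -, hpair⟩ := hg
  have hv : 2 ≤ v := by
    have := card_le_univ (colSet T ⟨0, hc⟩)
    rw [hb.card_colSet, Fintype.card_fin] at this
    omega
  -- row `a` of `XXᵀ` sums to `(r + c) · replNum a`: diagonal entry `2 · replNum a`, the rest `μ`
  have hrepl (a : Fin v) : (replNum T a : ℚ) = avgRepl r c v := by
    have hsum := hb.sum_mul_transpose_apply a
    rw [← add_sum_erase _ _ (mem_univ a), sum_congr rfl fun b hb' => by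
      rw [incidence_mul_transpose_apply, hpair a b (ne_of_mem_erase hb').symm],
      incidence_mul_transpose_apply, hb.rowPairCount_self, hb.colPairCount_self, sum_const,
      card_erase_of_mem (mem_univ a), card_univ, Fintype.card_fin, nsmul_eq_mul,
      Nat.cast_sub (by omega)] at hsum
    have hμ := muGrid_mul (r := r) (c := c) hv
    have hrc : (r : ℚ) + c - 2 ≠ 0 := by
      have : (2 : ℚ) ≤ r := by exact_mod_cast hr
      have : (1 : ℚ) ≤ c := by exact_mod_cast hc
      linarith
    refine mul_left_cancel₀ hrc ?_
    push_cast at hsum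
    linear_combination hμ - hsum
  refine ⟨?_, hrepl⟩
  rw [← hrepl ⟨0, by omega⟩]
  exact Rat.den_natCast _

theorem mul_transpose_eq (hg : IsBalancedGrid T) (he : IsEquireplicate T) :
    incidence T * (incidence T)ᵀ = diagOffDiag (2 * avgRepl r c v) (muGrid r c v) := by
  ext a b
  rw [incidence_mul_transpose_apply, diagOffDiag, of_apply]
  split_ifs with h
  · rw [h, hg.1.rowPairCount_self, hg.1.colPairCount_self, he.2]
    ring
  · exact hg.2.2 a b h

theorem card_le (hg : IsBalancedGrid T) (hr : 2 ≤ r) (hc : 0 < c) : v ≤ r + c - 1 := by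
  by_contra! hlt
  have he := hg.isEquireplicate hr hc
  have hμ := muGrid_mul (r := r) (c := c) (v := v) (by omega)
  have hev : avgRepl r c v * v = r * c := avgRepl_mul_card (by omega)
  have hμ0 : 0 ≤ muGrid r c v := by
    rw [← hg.2.2 ⟨0, by omega⟩ ⟨1, by omega⟩ (by simp [Fin.ext_iff])]
    positivity
  -- `μ (v - 1) = e (r + c - 2) < 2 e (v - 1)` as soon as `v ≥ r + c`
  have hμe : muGrid r c v < 2 * avgRepl r c v := by
    have hrcv : (r : ℚ) + c ≤ v := by exact_mod_cast (show r + c ≤ v by omega)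
    have hr' : (2 : ℚ) ≤ r := by exact_mod_cast hr
    have hc' : (1 : ℚ) ≤ c := by exact_mod_cast hc
    nlinarith
  have hrank := rank_incidence_of_mul_transpose_eq hμ0 hμe (hg.mul_transpose_eq he)
  have := rank_lt_card_of_mulVec_eq_zero (signVec_ne_zero (by omega)) hg.1.incidence_mulVec_signVec
  simp only [hrank, Fintype.card_sum, Fintype.card_fin] at this
  omega

end IsBalancedGrid

theorem IsBinaryDesign.incidence_mul_tripleGram (hb : IsBinaryDesign T) (he : IsEquireplicate T) :
    incidence T * tripleGram r c (avgRepl r c v) (c - avgRepl r c v) (r - avgRepl r c v) =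
      (diagOffDiag (2 * avgRepl r c v) (avgRepl r c v) : Matrix (Fin v) (Fin v) ℚ) *
        incidence T := by
  set e := avgRepl r c v
  rw [ext_iff_mulVec]
  intro y
  set sr := ∑ i, y (.inl i)
  set sc := ∑ j, y (.inr j)
  have hsplit : tripleGram r c e (c - e) (r - e) *ᵥ y = e • y +
      ((c - e) * sr + e * sc) • (Sum.elim 1 0 : Fin r ⊕ Fin c → ℚ) +
      (e * sr + (r - e) * sc) • (Sum.elim 0 1 : Fin r ⊕ Fin c → ℚ) := by
    rw [tripleGram_mulVec]
    ext (i | j) <;>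
      simp only [Sum.elim_inl, Sum.elim_inr, Pi.add_apply, Pi.smul_apply, Pi.one_apply,
        Pi.zero_apply, smul_eq_mul, sub_sub_cancel, mul_one, mul_zero, add_zero] <;>
      ring
  rw [← mulVec_mulVec, ← mulVec_mulVec, diagOffDiag_mulVec, hb.sum_incidence_mulVec, hsplit,
    mulVec_add, mulVec_add, mulVec_smul, mulVec_smul, mulVec_smul,
    hb.incidence_mulVec_elim_one_zero, hb.incidence_mulVec_elim_zero_one]
  ext a
  simp only [Pi.add_apply, Pi.smul_apply, smul_eq_mul, he.2 a]
  ring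

theorem IsTripleArray.gram_eq (hT : IsTripleArray T) (hr : 2 ≤ r) (hc : 2 ≤ c)
    (hv : v + 1 = r + c) : (incidence T)ᵀ * incidence T =
      tripleGram r c (avgRepl r c v) (c - avgRepl r c v) (r - avgRepl r c v) := by
  obtain ⟨l₁, l₂, l₃, hG⟩ := hT.exists_gram_eq
  obtain ⟨h₁, h₂, h₃⟩ := hT.1.tripleGram_coeffs hT.2.1 (by omega) (by omega) hG
  have hev := avgRepl_mul_of_card_eq hv
  have hr' : (r : ℚ) - 1 ≠ 0 := by
    have : (2 : ℚ) ≤ r := by exact_mod_cast hr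
    linarith
  have hc' : (c : ℚ) - 1 ≠ 0 := by
    have : (2 : ℚ) ≤ c := by exact_mod_cast hc
    linarith
  have hl₂ : l₂ = c - avgRepl r c v := mul_left_cancel₀ hr' (by linear_combination h₂ + hev)
  have hl₃ : l₃ = r - avgRepl r c v := mul_left_cancel₀ hc' (by linear_combination h₃ + hev)
  rw [hG, h₁, hl₂, hl₃]

theorem IsTripleArray.isBalancedGrid (hT : IsTripleArray T) (hr : 2 ≤ r) (hc : 2 ≤ c)
    (hv : v + 1 = r + c) : IsBalancedGrid T := by
  have hb := hT.1
  have hrank := hT.rank_incidence hr hc (by omega) (by omega)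
  obtain ⟨B, hB⟩ := exists_mul_eq_one_of_rank_eq_card (A := incidence T)
    (by rw [Fintype.card_fin]; omega)
  have hM : incidence T * (incidence T)ᵀ = diagOffDiag (2 * avgRepl r c v) (avgRepl r c v) :=
    calc incidence T * (incidence T)ᵀ = incidence T * ((incidence T)ᵀ * incidence T) * B := by
          rw [Matrix.mul_assoc, Matrix.mul_assoc, hB, Matrix.mul_one]
      _ = diagOffDiag (2 * avgRepl r c v) (avgRepl r c v) := by
          rw [hT.gram_eq hr hc hv, hb.incidence_mul_tripleGram hT.2.1, Matrix.mul_assoc, hB,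
            Matrix.mul_one]
  have hμ := muGrid_eq_avgRepl hv (by omega)
  refine ⟨hb, hμ ▸ hT.2.1.1, fun a b hab => ?_⟩
  rw [← incidence_mul_transpose_apply, hM, hμ, diagOffDiag, of_apply, if_neg hab]

theorem IsBalancedGrid.isTripleArray (hg : IsBalancedGrid T) (hr : 2 ≤ r) (hc : 2 ≤ c)
    (hv : v + 1 = r + c) : IsTripleArray T := by
  have hb := hg.1
  have he := hg.isEquireplicate hr (by omega)
  have he_pos := avgRepl_pos (r := r) (c := c) (v := v) (by omega) (by omega) (by omega)
  have hM := hg.mul_transpose_eq he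
  rw [muGrid_eq_avgRepl hv (by omega)] at hM
  have hrank := rank_incidence_of_mul_transpose_eq he_pos.le (by linarith) hM
  have hker := (ker_mulVecLin_le_span_singleton_iff (signVec_ne_zero (by omega))
    hb.incidence_mulVec_signVec).2
    (by rw [Fintype.card_sum, Fintype.card_fin, Fintype.card_fin]; omega)
  have hG : (incidence T)ᵀ * incidence T =
      tripleGram r c (avgRepl r c v) (c - avgRepl r c v) (r - avgRepl r c v) := by
    refine sub_eq_zero.1 (eq_zero_of_mul_eq_zero_of_vecMul_eq_zero hker ?_ ?_ ?_)
    · rw [signVec_dotProduct_self]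
      positivity
    · rw [Matrix.mul_sub, ← Matrix.mul_assoc, hM, hb.incidence_mul_tripleGram he, sub_self]
    · rw [vecMul_sub, hb.signVec_vecMul_gram, ← mulVec_transpose, tripleGram_transpose,
        tripleGram_mulVec_signVec (avgRepl_mul_of_card_eq hv), sub_self]
  exact isTripleArray_of_gram_eq hb he hG

end

/-- (a) a triple array with `v > max(r,c)` has `v ≥ r + c − 1`;
(b) a balanced grid has `v ≤ r + c − 1`; (c) for `v = r + c − 1`, triple arrays
and balanced grids coincide. -/
theorem tripleArray_balancedGrid_duality {r c : ℕ} (hr : 2 ≤ r) (hc : 2 ≤ c) :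
    (∀ (v : ℕ) (T : Fin r × Fin c → Fin v),
      IsTripleArray T → max r c < v → r + c - 1 ≤ v) ∧
    (∀ (v : ℕ) (T : Fin r × Fin c → Fin v),
      IsBalancedGrid T → v ≤ r + c - 1) ∧
    (∀ T : Fin r × Fin c → Fin (r + c - 1),
      (IsTripleArray T ↔ IsBalancedGrid T)) := by
  have hv : r + c - 1 + 1 = r + c := by omega
  exact ⟨fun v T hT hmax => hT.le_card hr hc hmax, fun v T hg => hg.card_le hr (by omega),
    fun T => ⟨fun hT => hT.isBalancedGrid hr hc hv, fun hg => hg.isTripleArray hr hc hv⟩⟩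
end
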